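/- arXiv:1908.11184 — 7 statements merged into one kernel-verified Lean document; each statement's English description precedes it below -/
import Mathlib

section
/- Let G ∈ L¹(ℝⁿ) with ∫G dλ = 1, and let f be a continuous function on ℝⁿ with bounded support. Define G_t(x) = tⁿ G(tx) for t > 0. Then ∫ f·(G_t * μ) dλ → ∫ f dμ as t → ∞, uniformly over all probability measures μ on ℝⁿ. -/
open MeasureTheory

set_option maxHeartbeats 1000000


private lemma tail_small {n : ℕ} (G : EuclideanSpace ℝ (Fin n) → ℝ) (hG : Integrable G)
    (ε : ℝ) (hε : 0 < ε) :
    ∃ R : ℝ, 0 ≤ R ∧ ∫ z in (Metric.closedBall (0:EuclideanSpace ℝ (Fin n)) R)ᶜ, ‖G z‖ ≤ ε := by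
  have hmono : Monotone (fun k : ℕ => Metric.closedBall (0:EuclideanSpace ℝ (Fin n)) k) :=
    fun a b hab => Metric.closedBall_subset_closedBall (by exact_mod_cast hab)
  have hUnion : (⋃ k : ℕ, Metric.closedBall (0:EuclideanSpace ℝ (Fin n)) k) = Set.univ :=
    Metric.iUnion_closedBall_nat 0
  have htend := MeasureTheory.tendsto_setIntegral_of_monotone
    (fun k : ℕ => measurableSet_closedBall) hmono
    (by rw [hUnion]; exact hG.norm.integrableOn)
  rw [hUnion, setIntegral_univ] at htend
  have : ∀ᶠ k : ℕ in Filter.atTop,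
      |(∫ z in Metric.closedBall (0:EuclideanSpace ℝ (Fin n)) k, ‖G z‖) - ∫ z, ‖G z‖| < ε := by
    have := htend (Metric.ball_mem_nhds _ hε)
    simpa [Real.dist_eq] using this
  obtain ⟨k, hk⟩ := this.exists
  refine ⟨k, Nat.cast_nonneg k, ?_⟩
  have hsplit : (∫ z in Metric.closedBall (0:EuclideanSpace ℝ (Fin n)) k, ‖G z‖)
      + ∫ z in (Metric.closedBall (0:EuclideanSpace ℝ (Fin n)) k)ᶜ, ‖G z‖ = ∫ z, ‖G z‖ :=
    integral_add_compl measurableSet_closedBall hG.norm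
  have := abs_lt.mp hk
  linarith [this.1, this.2]

private lemma key (n : ℕ) (G : EuclideanSpace ℝ (Fin n) → ℝ)
    (hGm : StronglyMeasurable G)
    (hG : Integrable G) (hG1 : (∫ x, G x) = 1)
    (f : EuclideanSpace ℝ (Fin n) → ℝ) (hf : Continuous f)
    (hfb : Bornology.IsBounded (Function.support f)) :
    ∀ ε > 0, ∃ T : ℝ, 1 ≤ T ∧ ∀ t ≥ T,
      ∀ μ : Measure (EuclideanSpace ℝ (Fin n)), IsProbabilityMeasure μ →
        |(∫ x, f x * (∫ y, (t ^ n) * G (t • (x - y)) ∂μ)) - ∫ x, f x ∂μ| ≤ ε := by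
  -- compact support, bound, uniform continuity
  have hcs : HasCompactSupport f := by
    rw [HasCompactSupport]
    exact Metric.isCompact_of_isClosed_isBounded isClosed_closure hfb.closure
  obtain ⟨C, hC⟩ := hf.bounded_above_of_compact_support hcs
  have hC0 : 0 ≤ C := le_trans (norm_nonneg _) (hC 0)
  have hunif : UniformContinuous f := hcs.uniformContinuous_of_continuous hf
  set I : ℝ := ∫ z, ‖G z‖ with hIdef
  have hI0 : 0 ≤ I := integral_nonneg (fun z => norm_nonneg _)
  intro ε hε
  set ε₁ : ℝ := ε / (2 * (I + 1)) with hε₁def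
  have hε₁ : 0 < ε₁ := by positivity
  obtain ⟨δ, hδ, hδf⟩ := Metric.uniformContinuous_iff.mp hunif ε₁ hε₁
  set εt : ℝ := ε / (2 * (C + C + 1)) with hεtdef
  have hεt : 0 < εt := by positivity
  obtain ⟨R, hR0, hRtail⟩ := tail_small G hG εt hεt
  refine ⟨max 1 (R / δ + 1), le_max_left _ _, ?_⟩
  intro t ht μ hμ
  have ht1 : (1:ℝ) ≤ t := le_trans (le_max_left _ _) ht
  have ht0 : (0:ℝ) < t := lt_of_lt_of_le one_pos ht1
  have htne : t ≠ 0 := ne_of_gt ht0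
  have htn0 : (0:ℝ) < t ^ n := pow_pos ht0 n
  have htR : R < t * δ := by
    have h2 : R / δ + 1 ≤ t := le_trans (le_max_right _ _) ht
    have h3 : R / δ * δ = R := div_mul_cancel₀ R (ne_of_gt hδ)
    nlinarith
  -- integrability in x for fixed y
  have hGy : ∀ y : EuclideanSpace ℝ (Fin n), Integrable (fun x => G (t • (x - y))) := by
    intro y
    have h1 : Integrable (fun x => G (x - t • y)) := hG.comp_sub_right (t • y)
    have h2 := h1.comp_smul (R := t) htne
    simpa [smul_sub] using h2
  have hfGy : ∀ y : EuclideanSpace ℝ (Fin n),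
      Integrable (fun x => f x * (t ^ n * G (t • (x - y)))) := fun y =>
    (((hGy y).const_mul (t ^ n)).bdd_mul hf.aestronglyMeasurable (Filter.Eventually.of_forall hC))
  -- L¹ norm computation
  have hnorm : ∀ y : EuclideanSpace ℝ (Fin n),
      (∫ x, ‖G (t • (x - y))‖) = (t ^ n)⁻¹ * I := by
    intro y
    have h1 : (fun x : EuclideanSpace ℝ (Fin n) => ‖G (t • (x - y))‖)
        = fun x => (fun z => ‖G (z - t • y)‖) (t • x) := by
      funext x; simp [smul_sub]
    rw [h1, MeasureTheory.Measure.integral_comp_smul volume (fun z => ‖G (z - t • y)‖) t,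
      finrank_euclideanSpace_fin, smul_eq_mul,
      integral_sub_right_eq_self (fun z => ‖G z‖) (t • y),
      abs_of_nonneg (inv_nonneg.mpr (le_of_lt htn0))]
  -- strong measurability on product
  have hsm2 : Measurable (fun p : (EuclideanSpace ℝ (Fin n)) × (EuclideanSpace ℝ (Fin n)) =>
      t • (p.1 - p.2)) := by fun_prop
  have hFsm : StronglyMeasurable
      (fun p : (EuclideanSpace ℝ (Fin n)) × (EuclideanSpace ℝ (Fin n)) =>
        f p.1 * (t ^ n * G (t • (p.1 - p.2)))) := by
    apply StronglyMeasurable.mul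
    · have hc1 : Continuous (fun p : (EuclideanSpace ℝ (Fin n)) × (EuclideanSpace ℝ (Fin n)) =>
          f p.1) := by fun_prop
      exact hc1.stronglyMeasurable
    · apply StronglyMeasurable.mul stronglyMeasurable_const
      have := hGm.comp_measurable hsm2
      simpa [Function.comp_def] using this
  -- integrability on product
  have hFint : Integrable
      (fun p : (EuclideanSpace ℝ (Fin n)) × (EuclideanSpace ℝ (Fin n)) =>
        f p.1 * (t ^ n * G (t • (p.1 - p.2)))) (volume.prod μ) := by
    rw [integrable_prod_iff' hFsm.aestronglyMeasurable]
    constructor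
    · exact Filter.Eventually.of_forall fun y => hfGy y
    · apply Integrable.mono' (integrable_const (C * I))
      · exact (hFsm.norm.integral_prod_left').aestronglyMeasurable
      · refine Filter.Eventually.of_forall fun y => ?_
        have hnn : 0 ≤ ∫ x, ‖f x * (t ^ n * G (t • (x - y)))‖ :=
          integral_nonneg fun x => norm_nonneg _
        rw [Real.norm_of_nonneg hnn]
        have hle : (∫ x, ‖f x * (t ^ n * G (t • (x - y)))‖)
            ≤ ∫ x, C * (t ^ n * ‖G (t • (x - y))‖) := by
          apply integral_mono_of_nonneg (Filter.Eventually.of_forall fun x => norm_nonneg _)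
            (((hGy y).norm.const_mul (t ^ n)).const_mul C)
          refine Filter.Eventually.of_forall fun x => ?_
          simp only [norm_mul, Real.norm_of_nonneg (le_of_lt htn0)]
          gcongr
          exact hC x
        calc (∫ x, ‖f x * (t ^ n * G (t • (x - y)))‖)
            ≤ ∫ x, C * (t ^ n * ‖G (t • (x - y))‖) := hle
          _ = C * (t ^ n * ((t ^ n)⁻¹ * I)) := by
              rw [integral_const_mul, integral_const_mul, hnorm y]
          _ = C * I := by field_simp
  -- Fubini
  have hswap := integral_integral_swap
    (f := fun x y => f x * (t ^ n * G (t • (x - y)))) hFint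
  have hLHS : (∫ x, f x * (∫ y, (t ^ n) * G (t • (x - y)) ∂μ))
      = ∫ y, (∫ x, f x * (t ^ n * G (t • (x - y)))) ∂μ := by
    rw [← hswap]
    exact integral_congr_ae (Filter.Eventually.of_forall fun x =>
      (integral_const_mul (f x) _).symm)
  -- change of variables
  have hcov : ∀ y : EuclideanSpace ℝ (Fin n), (∫ x, f x * (t ^ n * G (t • (x - y))))
      = ∫ z, f (y + t⁻¹ • z) * G z := by
    intro y
    have e1 : (∫ x, f x * (t ^ n * G (t • (x - y))))
        = ∫ x, f (x + y) * (t ^ n * G (t • x)) := by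
      rw [← integral_add_right_eq_self (fun x => f x * (t ^ n * G (t • (x - y)))) y]
      congr 1; funext x; rw [add_sub_cancel_right]
    have e2 : (fun x : EuclideanSpace ℝ (Fin n) => f (x + y) * (t ^ n * G (t • x)))
        = fun x => (fun z => t ^ n * (f (y + t⁻¹ • z) * G z)) (t • x) := by
      funext x
      simp only [smul_smul, inv_mul_cancel₀ htne, one_smul]
      rw [add_comm y x]; ring
    rw [e1, e2, MeasureTheory.Measure.integral_comp_smul volume
      (fun z => t ^ n * (f (y + t⁻¹ • z) * G z)) t,
      finrank_euclideanSpace_fin, smul_eq_mul, integral_const_mul,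
      abs_of_nonneg (inv_nonneg.mpr (le_of_lt htn0)), ← mul_assoc,
      inv_mul_cancel₀ (ne_of_gt htn0), one_mul]
  set A : EuclideanSpace ℝ (Fin n) → ℝ := fun y => ∫ z, f (y + t⁻¹ • z) * G z with hAdef
  -- integrability of inner functions in z
  have hct : Continuous (fun p : (EuclideanSpace ℝ (Fin n)) × (EuclideanSpace ℝ (Fin n)) =>
      f (p.1 + t⁻¹ • p.2)) := by fun_prop
  have hint1 : ∀ y : EuclideanSpace ℝ (Fin n),
      Integrable (fun z => f (y + t⁻¹ • z) * G z) := by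
    intro y
    refine hG.bdd_mul ?_ (c := C) (Filter.Eventually.of_forall fun z => hC _)
    have : Continuous fun z : EuclideanSpace ℝ (Fin n) => f (y + t⁻¹ • z) := by fun_prop
    exact this.aestronglyMeasurable
  -- pointwise bound |A y - f y| ≤ ε
  have hbound : ∀ y : EuclideanSpace ℝ (Fin n), |A y - f y| ≤ ε := by
    intro y
    have hfy : f y = ∫ z, f y * G z := by rw [integral_const_mul, hG1, mul_one]
    have hsub : A y - f y = ∫ z, (f (y + t⁻¹ • z) - f y) * G z := by
      calc A y - f y = (∫ z, f (y + t⁻¹ • z) * G z) - ∫ z, f y * G z := by rw [← hfy]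
        _ = ∫ z, (f (y + t⁻¹ • z) * G z - f y * G z) :=
            (integral_sub (hint1 y) (hG.const_mul (f y))).symm
        _ = ∫ z, (f (y + t⁻¹ • z) - f y) * G z := by congr 1; funext z; ring
    rw [hsub]
    have hΔc : Continuous (fun z : EuclideanSpace ℝ (Fin n) => f (y + t⁻¹ • z) - f y) := by
      fun_prop
    have hΔbd : ∀ z : EuclideanSpace ℝ (Fin n), |f (y + t⁻¹ • z) - f y| ≤ C + C := fun z =>
      calc |f (y + t⁻¹ • z) - f y| ≤ |f (y + t⁻¹ • z)| + |f y| := abs_sub _ _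
        _ ≤ C + C := add_le_add (hC _) (hC _)
    have hIntD : Integrable (fun z => |f (y + t⁻¹ • z) - f y| * ‖G z‖) :=
      hG.norm.bdd_mul (hΔc.abs.aestronglyMeasurable)
        (c := C + C) (Filter.Eventually.of_forall fun z => by simpa [abs_abs] using hΔbd z)
    have habs : |∫ z, (f (y + t⁻¹ • z) - f y) * G z|
        ≤ ∫ z, |f (y + t⁻¹ • z) - f y| * ‖G z‖ := by
      have hh := norm_integral_le_of_norm_le
        (f := fun z : EuclideanSpace ℝ (Fin n) => (f (y + t⁻¹ • z) - f y) * G z) hIntD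
        (Filter.Eventually.of_forall fun z =>
          le_of_eq (by rw [norm_mul, Real.norm_eq_abs]))
      simpa using hh
    have hsplit : (∫ z, |f (y + t⁻¹ • z) - f y| * ‖G z‖)
        = (∫ z in Metric.closedBall (0:EuclideanSpace ℝ (Fin n)) R,
            |f (y + t⁻¹ • z) - f y| * ‖G z‖)
          + ∫ z in (Metric.closedBall (0:EuclideanSpace ℝ (Fin n)) R)ᶜ,
            |f (y + t⁻¹ • z) - f y| * ‖G z‖ :=
      (integral_add_compl measurableSet_closedBall hIntD).symm
    have h1 : (∫ z in Metric.closedBall (0:EuclideanSpace ℝ (Fin n)) R,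
        |f (y + t⁻¹ • z) - f y| * ‖G z‖) ≤ ε₁ * I := by
      have hle : (∫ z in Metric.closedBall (0:EuclideanSpace ℝ (Fin n)) R,
          |f (y + t⁻¹ • z) - f y| * ‖G z‖)
          ≤ ∫ z in Metric.closedBall (0:EuclideanSpace ℝ (Fin n)) R, ε₁ * ‖G z‖ := by
        apply setIntegral_mono_on hIntD.integrableOn
          (hG.norm.const_mul ε₁).integrableOn measurableSet_closedBall
        intro z hz
        have hz' : ‖z‖ ≤ R := by simpa using hz
        have hdist : dist (y + t⁻¹ • z) y < δ := by
          rw [dist_eq_norm, add_sub_cancel_left, norm_smul, Real.norm_eq_abs,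
            abs_of_nonneg (inv_nonneg.mpr (le_of_lt ht0))]
          calc t⁻¹ * ‖z‖ ≤ t⁻¹ * R :=
              mul_le_mul_of_nonneg_left hz' (inv_nonneg.mpr (le_of_lt ht0))
            _ < δ := by rw [inv_mul_lt_iff₀ ht0]; linarith [htR]
        have := hδf hdist
        rw [Real.dist_eq] at this
        exact mul_le_mul_of_nonneg_right (le_of_lt this) (norm_nonneg _)
      calc (∫ z in Metric.closedBall (0:EuclideanSpace ℝ (Fin n)) R,
            |f (y + t⁻¹ • z) - f y| * ‖G z‖)
          ≤ ∫ z in Metric.closedBall (0:EuclideanSpace ℝ (Fin n)) R, ε₁ * ‖G z‖ := hle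
        _ = ε₁ * ∫ z in Metric.closedBall (0:EuclideanSpace ℝ (Fin n)) R, ‖G z‖ :=
            integral_const_mul _ _
        _ ≤ ε₁ * I := by
            apply mul_le_mul_of_nonneg_left _ (le_of_lt hε₁)
            exact setIntegral_le_integral hG.norm
              (Filter.Eventually.of_forall fun z => norm_nonneg _)
    have h2 : (∫ z in (Metric.closedBall (0:EuclideanSpace ℝ (Fin n)) R)ᶜ,
        |f (y + t⁻¹ • z) - f y| * ‖G z‖) ≤ (C + C) * εt := by
      have hle : (∫ z in (Metric.closedBall (0:EuclideanSpace ℝ (Fin n)) R)ᶜ,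
          |f (y + t⁻¹ • z) - f y| * ‖G z‖)
          ≤ ∫ z in (Metric.closedBall (0:EuclideanSpace ℝ (Fin n)) R)ᶜ, (C + C) * ‖G z‖ := by
        apply setIntegral_mono_on hIntD.integrableOn
          (hG.norm.const_mul (C + C)).integrableOn measurableSet_closedBall.compl
        intro z _
        exact mul_le_mul_of_nonneg_right (hΔbd z) (norm_nonneg _)
      calc (∫ z in (Metric.closedBall (0:EuclideanSpace ℝ (Fin n)) R)ᶜ,
            |f (y + t⁻¹ • z) - f y| * ‖G z‖)
          ≤ ∫ z in (Metric.closedBall (0:EuclideanSpace ℝ (Fin n)) R)ᶜ, (C + C) * ‖G z‖ := hle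
        _ = (C + C) * ∫ z in (Metric.closedBall (0:EuclideanSpace ℝ (Fin n)) R)ᶜ, ‖G z‖ :=
            integral_const_mul _ _
        _ ≤ (C + C) * εt := mul_le_mul_of_nonneg_left hRtail (by positivity)
    have hfin1 : ε₁ * I ≤ ε / 2 := by
      rw [hε₁def, div_mul_eq_mul_div, div_le_div_iff₀ (by positivity) (by norm_num)]
      nlinarith
    have hfin2 : (C + C) * εt ≤ ε / 2 := by
      rw [hεtdef, mul_div_assoc', div_le_div_iff₀ (by positivity) (by norm_num)]
      nlinarith
    calc |∫ z, (f (y + t⁻¹ • z) - f y) * G z|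
        ≤ ∫ z, |f (y + t⁻¹ • z) - f y| * ‖G z‖ := habs
      _ = (∫ z in Metric.closedBall (0:EuclideanSpace ℝ (Fin n)) R,
            |f (y + t⁻¹ • z) - f y| * ‖G z‖)
          + ∫ z in (Metric.closedBall (0:EuclideanSpace ℝ (Fin n)) R)ᶜ,
            |f (y + t⁻¹ • z) - f y| * ‖G z‖ := hsplit
      _ ≤ ε₁ * I + (C + C) * εt := add_le_add h1 h2
      _ ≤ ε / 2 + ε / 2 := add_le_add hfin1 hfin2
      _ = ε := by ring
  -- integrability of A and f over μ
  have hAsm : StronglyMeasurable A := by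
    have hsm : StronglyMeasurable
        (fun p : (EuclideanSpace ℝ (Fin n)) × (EuclideanSpace ℝ (Fin n)) =>
          f (p.1 + t⁻¹ • p.2) * G p.2) := by
      apply StronglyMeasurable.mul hct.stronglyMeasurable
      have hm : Measurable (fun p : (EuclideanSpace ℝ (Fin n)) × (EuclideanSpace ℝ (Fin n)) =>
          p.2) := measurable_snd
      have := hGm.comp_measurable hm
      simpa [Function.comp_def] using this
    exact hsm.integral_prod_right'
  have hAbd : ∀ y, ‖A y‖ ≤ C * I := by
    intro y
    have hb := norm_integral_le_of_norm_le
      (f := fun z : EuclideanSpace ℝ (Fin n) => f (y + t⁻¹ • z) * G z) (hG.norm.const_mul C)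
      (Filter.Eventually.of_forall fun z => by
        rw [norm_mul]
        exact mul_le_mul_of_nonneg_right (hC _) (norm_nonneg _))
    calc ‖A y‖ ≤ ∫ z, C * ‖G z‖ := hb
      _ = C * I := integral_const_mul _ _
  have hAint : Integrable A μ :=
    Integrable.mono' (integrable_const (C * I)) hAsm.aestronglyMeasurable
      (Filter.Eventually.of_forall hAbd)
  have hfint : Integrable f μ :=
    Integrable.mono' (integrable_const C) hf.aestronglyMeasurable
      (Filter.Eventually.of_forall hC)
  -- conclude
  rw [hLHS]
  have heqA : (∫ y, (∫ x, f x * (t ^ n * G (t • (x - y)))) ∂μ) = ∫ y, A y ∂μ :=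
    integral_congr_ae (Filter.Eventually.of_forall fun y => hcov y)
  rw [heqA, ← integral_sub hAint hfint]
  have hnb := norm_integral_le_of_norm_le (μ := μ) (integrable_const ε)
    (Filter.Eventually.of_forall fun y => by
      rw [Real.norm_eq_abs]; exact hbound y)
  simpa using hnb

/-- for `G ∈ L¹(ℝⁿ)` with `∫ G = 1` and continuous `f` of bounded support,
`∫ f ⋅ (G_t * μ) dλ → ∫ f dμ` as `t → ∞`, uniformly over probability measures `μ`,
where `G_t(x) = tⁿ G(tx)` and `(G_t * μ)(x) = ∫ G_t(x − y) dμ(y)`. -/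
theorem stmt1 (n : ℕ) (G : EuclideanSpace ℝ (Fin n) → ℝ)
    (hG : Integrable G) (hG1 : (∫ x, G x) = 1)
    (f : EuclideanSpace ℝ (Fin n) → ℝ) (hf : Continuous f)
    (hfb : Bornology.IsBounded (Function.support f)) :
    ∀ ε > 0, ∃ T : ℝ, ∀ t ≥ T,
      ∀ μ : Measure (EuclideanSpace ℝ (Fin n)), IsProbabilityMeasure μ →
        |(∫ x, f x * (∫ y, (t ^ n) * G (t • (x - y)) ∂μ)) - ∫ x, f x ∂μ| ≤ ε := by
  intro ε hε
  have hGa := hG.aestronglyMeasurable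
  set G' : EuclideanSpace ℝ (Fin n) → ℝ := hGa.mk G with hG'def
  have hG'm : StronglyMeasurable G' := hGa.stronglyMeasurable_mk
  have heq : G =ᵐ[volume] G' := hGa.ae_eq_mk
  have hG' : Integrable G' := hG.congr heq
  have hG'1 : (∫ x, G' x) = 1 := by rw [← integral_congr_ae heq, hG1]
  obtain ⟨T, hT1, hT⟩ := key n G' hG'm hG' hG'1 f hf hfb ε hε
  refine ⟨T, fun t ht μ hμ => ?_⟩
  have ht1 : (1:ℝ) ≤ t := le_trans hT1 ht
  have ht0 : (0:ℝ) < t := lt_of_lt_of_le one_pos ht1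
  have htne : t ≠ 0 := ne_of_gt ht0
  have heqint : (∫ x, f x * (∫ y, (t ^ n) * G (t • (x - y)) ∂μ))
      = ∫ x, f x * (∫ y, (t ^ n) * G' (t • (x - y)) ∂μ) := by
    have hnull : volume {x : EuclideanSpace ℝ (Fin n) | ¬ G x = G' x} = 0 := ae_iff.mp heq
    obtain ⟨N, hNsub, hNm, hN0⟩ := exists_measurable_superset_of_null hnull
    have hsm2 : Measurable (fun p : (EuclideanSpace ℝ (Fin n)) × (EuclideanSpace ℝ (Fin n)) =>
        t • (p.1 - p.2)) := by fun_prop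
    have hS : MeasurableSet {p : (EuclideanSpace ℝ (Fin n)) × (EuclideanSpace ℝ (Fin n)) |
        t • (p.1 - p.2) ∈ N} := hsm2 hNm
    have hslice : ∀ y : EuclideanSpace ℝ (Fin n),
        volume {x : EuclideanSpace ℝ (Fin n) | t • (x - y) ∈ N} = 0 := by
      intro y
      have hset : {x : EuclideanSpace ℝ (Fin n) | t • (x - y) ∈ N}
          = (fun x : EuclideanSpace ℝ (Fin n) => t • x) ⁻¹'
            ((fun z : EuclideanSpace ℝ (Fin n) => z - t • y) ⁻¹' N) := by
        ext x; simp [smul_sub]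
      rw [hset, MeasureTheory.Measure.addHaar_preimage_smul volume htne]
      have : (fun z : EuclideanSpace ℝ (Fin n) => z - t • y) ⁻¹' N
          = (fun z : EuclideanSpace ℝ (Fin n) => z + (-(t • y))) ⁻¹' N := by
        simp [sub_eq_add_neg]
      rw [this, measure_preimage_add_right volume (-(t • y)) N, hN0, mul_zero]
    have hprod : (volume.prod μ) {p : (EuclideanSpace ℝ (Fin n)) × (EuclideanSpace ℝ (Fin n)) |
        t • (p.1 - p.2) ∈ N} = 0 := by
      rw [MeasureTheory.Measure.prod_apply_symm hS]
      have hz : ∀ y : EuclideanSpace ℝ (Fin n),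
          volume ((fun x : EuclideanSpace ℝ (Fin n) => (x, y)) ⁻¹'
            {p : (EuclideanSpace ℝ (Fin n)) × (EuclideanSpace ℝ (Fin n)) |
              t • (p.1 - p.2) ∈ N}) = 0 := by
        intro y
        have : ((fun x : EuclideanSpace ℝ (Fin n) => (x, y)) ⁻¹'
            {p : (EuclideanSpace ℝ (Fin n)) × (EuclideanSpace ℝ (Fin n)) |
              t • (p.1 - p.2) ∈ N}) = {x : EuclideanSpace ℝ (Fin n) | t • (x - y) ∈ N} := rfl
        rw [this]; exact hslice y
      simp only [hz, lintegral_zero]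
    have hae : ∀ᵐ x : EuclideanSpace ℝ (Fin n),
        μ {y : EuclideanSpace ℝ (Fin n) | t • (x - y) ∈ N} = 0 := by
      rw [MeasureTheory.Measure.prod_apply hS] at hprod
      have hmeas : Measurable fun x : EuclideanSpace ℝ (Fin n) =>
          μ (Prod.mk x ⁻¹' {p : (EuclideanSpace ℝ (Fin n)) × (EuclideanSpace ℝ (Fin n)) |
            t • (p.1 - p.2) ∈ N}) := measurable_measure_prodMk_left hS
      rw [lintegral_eq_zero_iff hmeas] at hprod
      filter_upwards [hprod] with x hx
      simpa using hx
    apply integral_congr_ae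
    filter_upwards [hae] with x hx
    congr 1
    apply integral_congr_ae
    have hy : ∀ᵐ y ∂μ, t • (x - y) ∉ N := by
      rw [ae_iff]
      simpa using hx
    filter_upwards [hy] with y hy'
    have : G (t • (x - y)) = G' (t • (x - y)) := by
      by_contra hcon
      exact hy' (hNsub hcon)
    rw [this]
  rw [heqint]
  exact hT t ht μ hμ
end

section
/- Let (X,K) be a compact Hausdorff space with a similarity kernel. Then the map μ ↦ Kμ, from the space of Radon probability measures on X (with the weak* topology) to C(X) (with the uniform norm), is continuous. -/
/-!
Integration against a probability measure is 1-Lipschitz in the sup norm and the sections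
`K x` depend continuously on `x`, so the functions `x ↦ ∫ K x y dμ(y)`, `μ ∈ P(X)`, form an
equicontinuous family. On a compact space, pointwise convergence of an equicontinuous family is
uniform (Ascoli), and pointwise convergence is weak* convergence tested against the sections `K x`.
-/

open MeasureTheory Filter

theorem BoundedContinuousFunction.dist_integral_le {Y : Type*} [TopologicalSpace Y]
    [MeasurableSpace Y] [OpensMeasurableSpace Y] (μ : Measure Y) [IsProbabilityMeasure μ]
    (f g : BoundedContinuousFunction Y ℝ) :
    dist (∫ y, f y ∂μ) (∫ y, g y ∂μ) ≤ dist f g := by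
  rw [dist_eq_norm, dist_eq_norm, ← integral_sub (f.integrable μ) (g.integrable μ)]
  exact (f - g).norm_integral_le_norm μ

theorem equicontinuous_integral_of_continuous {X Y : Type*} [TopologicalSpace X]
    [TopologicalSpace Y] [MeasurableSpace Y] [OpensMeasurableSpace Y]
    {k : X → BoundedContinuousFunction Y ℝ} (hk : Continuous k) :
    Equicontinuous fun (μ : ProbabilityMeasure Y) x => ∫ y, k x y ∂(μ : Measure Y) := by
  intro x₀
  rw [Metric.equicontinuousAt_iff_right]
  intro ε hε
  filter_upwards [Metric.tendsto_nhds.mp (hk.tendsto x₀) ε hε] with x hx μ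
  exact (BoundedContinuousFunction.dist_integral_le _ _ _).trans_lt (dist_comm (k x) _ ▸ hx)

theorem continuous_integral_of_continuous {X Y : Type*} [TopologicalSpace X] [CompactSpace X]
    [TopologicalSpace Y] [MeasurableSpace Y] [OpensMeasurableSpace Y]
    {k : X → BoundedContinuousFunction Y ℝ} (hk : Continuous k) :
    Continuous fun μ : ProbabilityMeasure Y =>
      (⟨fun x => ∫ y, k x y ∂(μ : Measure Y),
        (equicontinuous_integral_of_continuous hk).continuous μ⟩ : C(X, ℝ)) := by
  rw [ContinuousMap.continuous_iff_continuous_uniformFun, continuous_iff_continuousAt]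
  intro μ₀
  refine ((equicontinuous_integral_of_continuous hk).tendsto_uniformFun_iff_pi _ _).mpr ?_
  exact tendsto_pi_nhds.mpr fun x =>
    ProbabilityMeasure.tendsto_iff_forall_integral_tendsto.mp tendsto_id (k x)

theorem stmt6_general {X : Type*} [TopologicalSpace X] [CompactSpace X]
    [MeasurableSpace X] [BorelSpace X]
    (K : X → X → ℝ) (hKc : Continuous fun p : X × X => K p.1 p.2) :
    ∃ F : ProbabilityMeasure X → C(X, ℝ), Continuous F ∧
      ∀ (μ : ProbabilityMeasure X) (x : X), F μ x = ∫ y, K x y ∂(μ : Measure X) := by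
  let kernelSection : X → BoundedContinuousFunction X ℝ := fun x =>
    (ContinuousMap.isometryEquivBoundedOfCompact X ℝ) (ContinuousMap.curry ⟨_, hKc⟩ x)
  have h_section : Continuous kernelSection :=
    (ContinuousMap.isometryEquivBoundedOfCompact X ℝ).continuous.comp
      (ContinuousMap.curry ⟨_, hKc⟩).continuous
  exact ⟨_, continuous_integral_of_continuous h_section, fun _ _ => rfl⟩

/-- the map `μ ↦ Kμ` from the space of Radon probability measures on a
compact Hausdorff space `X` (weak* topology) to `C(X)` (uniform norm) is continuous.
Formally: there is a continuous map `F : P(X) → C(X)` with `F μ x = ∫ K(x,y) dμ(y)`. -/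
theorem stmt6 {X : Type*} [TopologicalSpace X] [CompactSpace X] [T2Space X]
    [MeasurableSpace X] [BorelSpace X]
    (K : X → X → ℝ) (hKc : Continuous fun p : X × X => K p.1 p.2)
    (hKnn : ∀ x y, 0 ≤ K x y) (hKd : ∀ x, 0 < K x x) :
    ∃ F : ProbabilityMeasure X → C(X, ℝ), Continuous F ∧
      ∀ (μ : ProbabilityMeasure X) (x : X), F μ x = ∫ y, K x y ∂(μ : Measure X) :=
  stmt6_general K hKc
end

section
/- Let (X,K) be a compact Hausdorff space with a symmetric continuous similarity kernel K (strictly positive on the diagonal). If μ and ν are signed Radon measures on X with Kμ ≡ 1 and Kν ≡ 1 on X, then μ(X) = ν(X). -/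
open MeasureTheory

/-- Continuity of the parametrized integral of a continuous kernel on a compact space. -/
lemma stmt7_contInt {X : Type*} [TopologicalSpace X] [CompactSpace X]
    [MeasurableSpace X] [OpensMeasurableSpace X]
    (K : X → X → ℝ) (hKc : Continuous fun p : X × X => K p.1 p.2)
    (σ : Measure X) [IsFiniteMeasure σ] :
    Continuous fun x => ∫ y, K x y ∂σ := by
  rw [← continuousOn_univ]
  exact continuousOn_integral_of_compact_support (μ := σ) (s := Set.univ)
    (k := Set.univ) isCompact_univ hKc.continuousOn
    (fun p x _ hx => absurd (Set.mem_univ x) hx)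

lemma stmt7_swap {X : Type*} [TopologicalSpace X] [CompactSpace X]
    [MeasurableSpace X] [OpensMeasurableSpace X]
    (K : X → X → ℝ) (hKc : Continuous fun p : X × X => K p.1 p.2)
    (hKs : ∀ x y, K x y = K y x)
    (σ τ : Measure X) [IsFiniteMeasure σ] [IsFiniteMeasure τ] :
    ∫ x, ∫ y, K x y ∂τ ∂σ = ∫ x, ∫ y, K x y ∂σ ∂τ := by
  have h := integral_integral_swap_of_hasCompactSupport (f := K)
    (μ := σ) (ν := τ) hKc (HasCompactSupport.of_compactSpace _)
  rw [h]
  congr 1 with y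
  congr 1 with x
  exact hKs x y

/-- if `K` is a symmetric similarity kernel on a compact Hausdorff space and
`μ, ν` are (signed Radon) weight measures, i.e. `Kμ ≡ 1 ≡ Kν`, then `μ(X) = ν(X)`.
A signed measure is represented as a difference `μ⁺ − μ⁻` of finite positive measures. -/
theorem stmt7 {X : Type*} [TopologicalSpace X] [CompactSpace X] [T2Space X]
    [MeasurableSpace X] [BorelSpace X]
    (K : X → X → ℝ) (hKc : Continuous fun p : X × X => K p.1 p.2)
    (hKnn : ∀ x y, 0 ≤ K x y) (hKd : ∀ x, 0 < K x x)
    (hKs : ∀ x y, K x y = K y x)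
    (μp μm νp νm : Measure X)
    [IsFiniteMeasure μp] [IsFiniteMeasure μm] [IsFiniteMeasure νp] [IsFiniteMeasure νm]
    [μp.Regular] [μm.Regular] [νp.Regular] [νm.Regular]
    (hμ : ∀ x, (∫ y, K x y ∂μp) - (∫ y, K x y ∂μm) = 1)
    (hν : ∀ x, (∫ y, K x y ∂νp) - (∫ y, K x y ∂νm) = 1) :
    (μp Set.univ).toReal - (μm Set.univ).toReal
      = (νp Set.univ).toReal - (νm Set.univ).toReal := by
  -- integrability of the parametrized integrals
  have hint : ∀ (σ τ : Measure X) [IsFiniteMeasure σ] [IsFiniteMeasure τ],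
      Integrable (fun x => ∫ y, K x y ∂τ) σ := by
    intro σ τ _ _
    exact (stmt7_contInt K hKc τ).integrable_of_hasCompactSupport
      (HasCompactSupport.of_compactSpace _)
  -- total mass as an integral of the constant 1
  have htot : ∀ (σ : Measure X) [IsFiniteMeasure σ],
      (σ Set.univ).toReal = ∫ _x, (1 : ℝ) ∂σ := by
    intro σ _
    simp
    rfl
  have key : ∀ (σp σm τp τm : Measure X) [IsFiniteMeasure σp] [IsFiniteMeasure σm]
      [IsFiniteMeasure τp] [IsFiniteMeasure τm],
      (∀ x, (∫ y, K x y ∂σp) - (∫ y, K x y ∂σm) = 1) →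
      (τp Set.univ).toReal - (τm Set.univ).toReal
        = ((∫ x, ∫ y, K x y ∂σp ∂τp) - (∫ x, ∫ y, K x y ∂σm ∂τp))
          - ((∫ x, ∫ y, K x y ∂σp ∂τm) - (∫ x, ∫ y, K x y ∂σm ∂τm)) := by
    intro σp σm τp τm _ _ _ _ h
    rw [htot τp, htot τm]
    have e1 : ∫ _x, (1 : ℝ) ∂τp
        = (∫ x, ∫ y, K x y ∂σp ∂τp) - (∫ x, ∫ y, K x y ∂σm ∂τp) := by
      rw [← integral_sub (hint τp σp) (hint τp σm)]
      exact integral_congr_ae (Filter.Eventually.of_forall fun x => (h x).symm)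
    have e2 : ∫ _x, (1 : ℝ) ∂τm
        = (∫ x, ∫ y, K x y ∂σp ∂τm) - (∫ x, ∫ y, K x y ∂σm ∂τm) := by
      rw [← integral_sub (hint τm σp) (hint τm σm)]
      exact integral_congr_ae (Filter.Eventually.of_forall fun x => (h x).symm)
    rw [e1, e2]
  have kμ := key νp νm μp μm hν
  have kν := key μp μm νp νm hμ
  rw [kμ, kν]
  rw [stmt7_swap K hKc hKs νp μp, stmt7_swap K hKc hKs νp μm,
    stmt7_swap K hKc hKs νm μp, stmt7_swap K hKc hKs νm μm]
  ring
end

section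
/- Let (X,K) be a compact Hausdorff space with a similarity kernel. For every q ∈ (1, ∞), the diversity function D_q^K : P(X) → ℝ is continuous with respect to the weak* topology on the space P(X) of Radon probability measures. -/
open MeasureTheory BoundedContinuousFunction

/-- The typicality function of a measure `μ` with respect to a kernel `K`. -/
noncomputable def typ {X : Type*} [MeasurableSpace X] (K : X → X → ℝ) (μ : Measure X)
    (x : X) : ℝ := ∫ y, K x y ∂μ

open Filter Topology BoundedContinuousFunction in
/-- Joint continuity of the integration pairing. -/
lemma pairing_continuous {X : Type*} [TopologicalSpace X] [MeasurableSpace X]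
    [OpensMeasurableSpace X] :
    Continuous fun p : (X →ᵇ ℝ) × ProbabilityMeasure X =>
      ∫ x, p.1 x ∂(p.2 : Measure X) := by
  rw [continuous_iff_continuousAt]
  rintro ⟨f₀, μ₀⟩
  have h1 : Tendsto (fun p : (X →ᵇ ℝ) × ProbabilityMeasure X =>
      ∫ x, (p.1 - f₀) x ∂(p.2 : Measure X)) (𝓝 (f₀, μ₀)) (𝓝 0) := by
    have hb : ∀ p : (X →ᵇ ℝ) × ProbabilityMeasure X,
        ‖∫ x, (p.1 - f₀) x ∂(p.2 : Measure X)‖ ≤ ‖p.1 - f₀‖ :=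
      fun p => (p.1 - f₀).norm_integral_le_norm _
    apply squeeze_zero_norm hb
    have : Tendsto (fun p : (X →ᵇ ℝ) × ProbabilityMeasure X => ‖p.1 - f₀‖)
        (𝓝 (f₀, μ₀)) (𝓝 ‖f₀ - f₀‖) :=
      ((continuous_fst.sub continuous_const).norm).tendsto (f₀, μ₀)
    simpa only [sub_self, norm_zero] using this
  have h2 : Tendsto (fun p : (X →ᵇ ℝ) × ProbabilityMeasure X =>
      ∫ x, f₀ x ∂(p.2 : Measure X)) (𝓝 (f₀, μ₀)) (𝓝 (∫ x, f₀ x ∂(μ₀ : Measure X))) :=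
    ((ProbabilityMeasure.continuous_integral_boundedContinuousFunction f₀).comp
      continuous_snd).continuousAt
  have hsum := h1.add h2
  rw [zero_add] at hsum
  have heq : ∀ p : (X →ᵇ ℝ) × ProbabilityMeasure X,
      (∫ x, (p.1 - f₀) x ∂(p.2 : Measure X)) + ∫ x, f₀ x ∂(p.2 : Measure X)
        = ∫ x, p.1 x ∂(p.2 : Measure X) := by
    intro p
    simp only [coe_sub, Pi.sub_apply]
    rw [integral_sub (p.1.integrable _) (f₀.integrable _)]
    ring
  exact hsum.congr heq

/-- In a compact space, a probability measure has a point all of whose neighborhoods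
have positive measure. -/
lemma exists_forall_nhds_measure_ne_zero {X : Type*} [TopologicalSpace X] [CompactSpace X]
    [MeasurableSpace X] (μ : Measure X) [IsProbabilityMeasure μ] :
    ∃ x₀ : X, ∀ U ∈ nhds x₀, μ U ≠ 0 := by
  by_contra h
  push_neg at h
  choose U hU hU0 using h
  obtain ⟨t, -, ht⟩ := isCompact_univ.elim_nhds_subcover U (fun x _ => hU x)
  have : μ Set.univ = 0 := by
    refine le_antisymm (le_trans (measure_mono ht) ?_) (zero_le)
    refine le_trans (measure_biUnion_finset_le t U) ?_
    simp [hU0]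
  simp [measure_univ] at this

/-- A nonnegative continuous function positive at a point whose neighborhoods all have
positive measure has positive integral. -/
lemma integral_pos_of_continuous {X : Type*} [TopologicalSpace X] [CompactSpace X]
    [MeasurableSpace X] [OpensMeasurableSpace X] (μ : Measure X) [IsProbabilityMeasure μ]
    {f : X → ℝ} (hf : Continuous f) (hnn : ∀ x, 0 ≤ f x)
    {x₀ : X} (hx₀ : ∀ U ∈ nhds x₀, μ U ≠ 0) (hpos : 0 < f x₀) :
    0 < ∫ x, f x ∂μ := by
  set W := f ⁻¹' Set.Ioi (f x₀ / 2) with hW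
  have hWopen : IsOpen W := isOpen_Ioi.preimage hf
  have hWx : x₀ ∈ W := by
    simp only [hW, Set.mem_preimage, Set.mem_Ioi]
    linarith
  have hμW : 0 < (μ W).toReal :=
    ENNReal.toReal_pos (hx₀ W (hWopen.mem_nhds hWx)) (measure_ne_top μ W)
  have hint : Integrable f μ :=
    (BoundedContinuousFunction.mkOfCompact ⟨f, hf⟩).integrable μ
  calc (0 : ℝ) < (f x₀ / 2) * (μ W).toReal := mul_pos (by linarith) hμW
    _ ≤ ∫ x in W, f x ∂μ := setIntegral_ge_of_const_le_real hWopen.measurableSet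
        (measure_ne_top μ W) (fun x hx => le_of_lt hx) hint.integrableOn
    _ ≤ ∫ x, f x ∂μ := setIntegral_le_integral hint (Filter.Eventually.of_forall hnn)

/-- for a similarity kernel on a compact Hausdorff space and for each
`q ∈ (1,∞)`, the diversity `D_q^K(μ) = (∫ (Kμ)^{q−1} dμ)^{1/(1−q)}` is continuous in
`μ ∈ P(X)` with respect to the weak* topology. -/
theorem stmt12 {X : Type*} [TopologicalSpace X] [CompactSpace X] [T2Space X]
    [MeasurableSpace X] [BorelSpace X]
    (K : X → X → ℝ) (hKc : Continuous fun p : X × X => K p.1 p.2)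
    (hKnn : ∀ x y, 0 ≤ K x y) (hKd : ∀ x, 0 < K x x)
    (q : ℝ) (hq : 1 < q) :
    Continuous (fun μ : ProbabilityMeasure X =>
      (∫ x, typ K (μ : Measure X) x ^ (q - 1) ∂(μ : Measure X)) ^ (1 / (1 - q))) := by
  -- the kernel as a continuous map
  set Kc : C(X × X, ℝ) := ⟨fun p => K p.1 p.2, hKc⟩ with hKcdef
  -- the "slice" map x ↦ K x ∙ as a continuous family of bounded continuous functions
  have hmk : Continuous (BoundedContinuousFunction.mkOfCompact : C(X, ℝ) → (X →ᵇ ℝ)) := by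
    apply Isometry.continuous
    intro f g
    rw [edist_dist, edist_dist, BoundedContinuousFunction.dist_mkOfCompact]
  set k : X → (X →ᵇ ℝ) := fun x => BoundedContinuousFunction.mkOfCompact (Kc.curry x) with hk
  have hkcont : Continuous k := hmk.comp (Kc.curry.continuous)
  -- joint continuity of (μ, x) ↦ typ K μ x
  have hjoint : Continuous fun p : ProbabilityMeasure X × X =>
      typ K (p.1 : Measure X) p.2 := by
    have : Continuous fun p : ProbabilityMeasure X × X =>
        ∫ y, (k p.2) y ∂(p.1 : Measure X) :=
      pairing_continuous.comp ((hkcont.comp continuous_snd).prodMk continuous_fst)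
    simpa [hk, typ, hKcdef] using this
  -- the typicality map into C(X, ℝ)
  set Ψ : C(ProbabilityMeasure X × X, ℝ) := ⟨_, hjoint⟩ with hΨ
  set Φ : ProbabilityMeasure X → C(X, ℝ) := fun μ => Ψ.curry μ with hΦ
  have hΦcont : Continuous Φ := Ψ.curry.continuous
  -- postcomposition with t ↦ t ^ (q - 1)
  have hrpow : Continuous fun t : ℝ => t ^ (q - 1) :=
    Real.continuous_rpow_const (by linarith)
  set G : C(X, ℝ) → C(X, ℝ) := fun f => ContinuousMap.comp ⟨_, hrpow⟩ f with hG
  have hGcont : Continuous G := ContinuousMap.continuous_postcomp _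
  -- the map μ ↦ ∫ (typ K μ) ^ (q-1) dμ is continuous
  have hFcont : Continuous fun μ : ProbabilityMeasure X =>
      ∫ x, typ K (μ : Measure X) x ^ (q - 1) ∂(μ : Measure X) := by
    have : Continuous fun μ : ProbabilityMeasure X =>
        ∫ x, (BoundedContinuousFunction.mkOfCompact (G (Φ μ))) x ∂(μ : Measure X) :=
      pairing_continuous.comp ((hmk.comp (hGcont.comp hΦcont)).prodMk continuous_id)
    simpa [hG, hΦ, hΨ, typ] using this
  -- positivity of the integral
  have hFpos : ∀ μ : ProbabilityMeasure X,
      0 < ∫ x, typ K (μ : Measure X) x ^ (q - 1) ∂(μ : Measure X) := by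
    intro μ
    obtain ⟨x₀, hx₀⟩ := exists_forall_nhds_measure_ne_zero (μ : Measure X)
    have htypcont : Continuous fun x => typ K (μ : Measure X) x :=
      hjoint.comp (Continuous.prodMk_right μ)
    have htypnn : ∀ x, 0 ≤ typ K (μ : Measure X) x := fun x =>
      integral_nonneg (fun y => hKnn x y)
    have htyppos : 0 < typ K (μ : Measure X) x₀ := by
      have hKx₀cont : Continuous fun y => K x₀ y := hKc.comp (Continuous.prodMk_right x₀)
      exact integral_pos_of_continuous (μ : Measure X) hKx₀cont (hKnn x₀) hx₀ (hKd x₀)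
    exact integral_pos_of_continuous (μ : Measure X)
      (hrpow.comp htypcont) (fun x => Real.rpow_nonneg (htypnn x) _) hx₀
      (Real.rpow_pos_of_pos htyppos _)
  -- conclude by composing with t ↦ t ^ (1/(1-q)), continuous away from 0
  rw [continuous_iff_continuousAt]
  intro μ
  exact hFcont.continuousAt.rpow_const (Or.inl (ne_of_gt (hFpos μ)))
end

section
/- Let X be a nonempty compact Hausdorff space and K, K' two symmetric similarity kernels on X with K(x,y) ≥ K'(x,y) for all x, y. Then the maximum diversity satisfies Dmax(X,K) ≤ Dmax(X,K'). -/
open MeasureTheory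

/-- The diversity of order `q ∈ [−∞,∞]` of a probability measure `μ` with respect to a
similarity kernel `K`. -/
noncomputable def diversity {X : Type*} [MeasurableSpace X] (K : X → X → ℝ) (μ : Measure X)
    (q : EReal) : ℝ :=
  if q = ⊤ then (essSup (typ K μ) μ)⁻¹
  else if q = ⊥ then (essInf (typ K μ) μ)⁻¹
  else if q = 1 then Real.exp (-∫ x, Real.log (typ K μ x) ∂μ)
  else (∫ x, typ K μ x ^ (q.toReal - 1) ∂μ) ^ (1 / (1 - q.toReal))

/-- The support of a measure. -/
def msupp {X : Type*} [TopologicalSpace X] [MeasurableSpace X] (μ : Measure X) : Set X :=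
  {x | ∀ U : Set X, IsOpen U → x ∈ U → 0 < μ U}

open Filter Set
open scoped ENNReal NNReal

section helpers
variable {X : Type*} [TopologicalSpace X] [CompactSpace X] [T2Space X]
    [MeasurableSpace X] [BorelSpace X]

lemma cont_integrable {f : X → ℝ} (hf : Continuous f) (μ : Measure X) [IsFiniteMeasure μ] :
    Integrable f μ :=
  hf.integrable_of_hasCompactSupport (HasCompactSupport.of_compactSpace f)

lemma kslice_cont {L : X → X → ℝ} (hc : Continuous fun p : X × X => L p.1 p.2) (x : X) :
    Continuous fun y => L x y :=
  hc.comp (Continuous.prodMk_right x)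

lemma typ_cont (L : X → X → ℝ) (hc : Continuous fun p : X × X => L p.1 p.2)
    (μ : Measure X) [IsFiniteMeasure μ] : Continuous (typ L μ) := by
  have key : typ L μ = (fun f : C(X, ℝ) => ∫ y, f y ∂μ) ∘
      (ContinuousMap.curry ⟨fun p : X × X => L p.1 p.2, hc⟩) := rfl
  rw [key]
  refine Continuous.comp ?_ (ContinuousMap.continuous _)
  refine (LipschitzWith.of_dist_le_mul (K := ⟨(μ Set.univ).toReal, ENNReal.toReal_nonneg⟩)
    fun f g => ?_).continuous
  have hint : ∀ h : C(X, ℝ), Integrable (fun y => h y) μ := fun h => cont_integrable h.continuous μ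
  rw [Real.dist_eq, ← integral_sub (hint f) (hint g)]
  calc |∫ y, (f y - g y) ∂μ| ≤ ∫ y, |f y - g y| ∂μ := by
        simpa [Real.norm_eq_abs] using norm_integral_le_integral_norm (fun y => f y - g y) (μ := μ)
    _ ≤ ∫ _, dist f g ∂μ := by
        refine integral_mono ((hint f).sub (hint g)).abs (integrable_const _) fun y => ?_
        rw [← Real.dist_eq]
        exact ContinuousMap.dist_apply_le_dist y
    _ = (↑(⟨(μ Set.univ).toReal, ENNReal.toReal_nonneg⟩ : NNReal) : ℝ) * dist f g := by
        simp [mul_comm, measureReal_def]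


lemma typ_nonneg {L : X → X → ℝ} (hnn : ∀ x y, 0 ≤ L x y) (μ : Measure X) (x : X) :
    0 ≤ typ L μ x :=
  integral_nonneg fun y => hnn x y

lemma typ_le_const {L : X → X → ℝ} (hc : Continuous fun p : X × X => L p.1 p.2)
    {M : ℝ} (hM : ∀ x y, L x y ≤ M) (μ : Measure X) [IsProbabilityMeasure μ] (x : X) :
    typ L μ x ≤ M := by
  have : typ L μ x ≤ ∫ _, M ∂μ :=
    integral_mono (cont_integrable (kslice_cont hc x) μ) (integrable_const M) fun y => hM x y
  simpa using this

lemma typ_mono {L L' : X → X → ℝ} (hc : Continuous fun p : X × X => L p.1 p.2)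
    (hc' : Continuous fun p : X × X => L' p.1 p.2) (hle : ∀ x y, L' x y ≤ L x y)
    (μ : Measure X) [IsFiniteMeasure μ] (x : X) : typ L' μ x ≤ typ L μ x :=
  integral_mono (cont_integrable (kslice_cont hc' x) μ) (cont_integrable (kslice_cont hc x) μ)
    fun y => hle x y

lemma typ_lower {L : X → X → ℝ} (hc : Continuous fun p : X × X => L p.1 p.2)
    (hnn : ∀ x y, 0 ≤ L x y) (μ : Measure X) [IsFiniteMeasure μ]
    {δ : ℝ} {V : Set X} (hV : MeasurableSet V) {x : X}
    (hδ : ∀ y ∈ V, δ ≤ L x y) : δ * (μ V).toReal ≤ typ L μ x := by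
  have h1 : δ * (μ V).toReal ≤ ∫ y in V, L x y ∂μ :=
    setIntegral_ge_of_const_le_real hV (measure_ne_top μ V) hδ
      ((cont_integrable (kslice_cont hc x) μ).integrableOn)
  refine h1.trans (setIntegral_le_integral (cont_integrable (kslice_cont hc x) μ) ?_)
  exact Eventually.of_forall fun y => hnn x y

lemma exists_cover [Nonempty X] (L : X → X → ℝ)
    (hc : Continuous fun p : X × X => L p.1 p.2) (hd : ∀ x, 0 < L x x) :
    ∃ δ : ℝ, 0 < δ ∧ ∃ s : Finset (Set X), s.Nonempty ∧ (∀ V ∈ s, IsOpen V) ∧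
      (⋃ V ∈ s, V) = Set.univ ∧ ∀ V ∈ s, ∀ x ∈ V, ∀ y ∈ V, δ ≤ L x y := by
  classical
  have h : ∀ x : X, ∃ V : Set X, IsOpen V ∧ x ∈ V ∧ ∀ y ∈ V, ∀ z ∈ V, L x x / 2 ≤ L y z := by
    intro x
    have hop : IsOpen {p : X × X | L x x / 2 < L p.1 p.2} := isOpen_lt continuous_const hc
    obtain ⟨V₁, V₂, h1, h2, hx1, hx2, hsub⟩ :=
      isOpen_prod_iff.mp hop x x (by simpa using half_lt_self (hd x))
    exact ⟨V₁ ∩ V₂, h1.inter h2, ⟨hx1, hx2⟩,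
      fun y hy z hz => le_of_lt (hsub (Set.mk_mem_prod hy.1 hz.2))⟩
  choose V hVo hVx hVl using h
  obtain ⟨t, ht⟩ := isCompact_univ.elim_finite_subcover V hVo
    (fun x _ => Set.mem_iUnion.mpr ⟨x, hVx x⟩)
  have htne : t.Nonempty := by
    obtain ⟨x⟩ := ‹Nonempty X›
    obtain ⟨y, hy, -⟩ := Set.mem_iUnion₂.mp (ht (Set.mem_univ x))
    exact ⟨y, hy⟩
  refine ⟨(t.image fun x => L x x / 2).min' (htne.image _), ?_, t.image V, htne.image _,
    ?_, ?_, ?_⟩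
  · obtain ⟨a, ha, hae⟩ := Finset.mem_image.mp ((t.image fun x => L x x / 2).min'_mem (htne.image _))
    rw [← hae]
    exact half_pos (hd a)
  · intro W hW
    obtain ⟨a, _, rfl⟩ := Finset.mem_image.mp hW
    exact hVo a
  · apply Set.eq_univ_of_univ_subset
    intro x hx
    obtain ⟨y, hy, hxy⟩ := Set.mem_iUnion₂.mp (ht hx)
    exact Set.mem_biUnion (Finset.mem_image_of_mem V hy) hxy
  · intro W hW x hxW y hyW
    obtain ⟨a, ha, rfl⟩ := Finset.mem_image.mp hW
    exact le_trans (Finset.min'_le _ _ (Finset.mem_image_of_mem _ ha)) (hVl a x hxW y hyW)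


lemma measurable_rpow_comp {f : X → ℝ} (hf : Measurable f) (e : ℝ) (hnn : ∀ x, 0 ≤ f x) :
    Measurable fun x => f x ^ e := by
  have hfe : (fun x => f x ^ e) =
      fun x => if f x = 0 then (0:ℝ) ^ e else Real.exp (Real.log (f x) * e) := by
    funext x
    by_cases h : f x = 0
    · simp [h]
    · rw [if_neg h, ← Real.rpow_def_of_pos (lt_of_le_of_ne (hnn x) (Ne.symm h))]
  rw [hfe]
  exact Measurable.ite (hf (measurableSet_singleton 0)) measurable_const
    (Real.measurable_exp.comp ((Real.measurable_log.comp hf).mul_const e))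

lemma abs_log_le {c M x : ℝ} (hc : 0 < c) (h1 : c ≤ x) (h2 : x ≤ M) :
    |Real.log x| ≤ |Real.log c| + |Real.log M| := by
  have l1 : Real.log c ≤ Real.log x := Real.log_le_log hc h1
  have l2 : Real.log x ≤ Real.log M := Real.log_le_log (lt_of_lt_of_le hc h1) h2
  rw [abs_le]
  constructor
  · have := neg_abs_le (Real.log c)
    have := abs_nonneg (Real.log M)
    linarith
  · have := le_abs_self (Real.log M)
    have := abs_nonneg (Real.log c)
    linarith

lemma integrable_bdd {f : X → ℝ} {μ : Measure X} [IsFiniteMeasure μ]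
    (hm : AEStronglyMeasurable f μ) {C : ℝ} (h : ∀ᵐ x ∂μ, |f x| ≤ C) : Integrable f μ :=
  Integrable.mono' (integrable_const C) hm (by simpa [Real.norm_eq_abs] using h)

lemma exists_big {s : Finset (Set X)} (hne : s.Nonempty) (hscov : (⋃ V ∈ s, V) = Set.univ)
    (μ : Measure X) [IsProbabilityMeasure μ] :
    ∃ V ∈ s, 1 / (s.card : ℝ) ≤ (μ V).toReal := by
  by_contra hcon
  push_neg at hcon
  have h1 : (1 : ℝ≥0∞) ≤ ∑ V ∈ s, μ V := by
    rw [← measure_univ (μ := μ), ← hscov]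
    exact measure_biUnion_finset_le s id
  have h2 : (1 : ℝ) ≤ ∑ V ∈ s, (μ V).toReal := by
    rw [← ENNReal.toReal_sum fun V _ => measure_ne_top μ V]
    have hne' : ∑ V ∈ s, μ V ≠ ⊤ := (ENNReal.sum_lt_top.mpr fun V _ => measure_lt_top μ V).ne
    simpa using ENNReal.toReal_mono hne' h1
  have h3 : ∑ V ∈ s, (μ V).toReal < ∑ V ∈ s, 1 / (s.card : ℝ) :=
    Finset.sum_lt_sum_of_nonempty hne fun V hV => hcon V hV
  rw [Finset.sum_const, nsmul_eq_mul, mul_one_div,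
    div_self (by exact_mod_cast hne.card_pos.ne')] at h3
  linarith

lemma exists_g (L : X → X → ℝ) (hc : Continuous fun p : X × X => L p.1 p.2)
    (hnn : ∀ x y, 0 ≤ L x y) {δ : ℝ} (hδ : 0 < δ) {s : Finset (Set X)} (hne : s.Nonempty)
    (hso : ∀ V ∈ s, IsOpen V) (hscov : (⋃ V ∈ s, V) = Set.univ)
    (hsδ : ∀ V ∈ s, ∀ x ∈ V, ∀ y ∈ V, δ ≤ L x y)
    (μ : Measure X) [IsProbabilityMeasure μ] :
    ∃ g : X → ℝ, (∀ x, 0 ≤ g x) ∧ (∀ x, δ * g x ≤ typ L μ x) ∧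
      (∃ c, 0 < c ∧ ∀ᵐ x ∂μ, c ≤ g x) ∧
      (∀ x, 0 < g x → ∃ V ∈ s, x ∈ V ∧ g x = (μ V).toReal) := by
  classical
  refine ⟨fun x => s.sup' hne fun V => Set.indicator V (fun _ => (μ V).toReal) x, ?_, ?_, ?_, ?_⟩
  · intro x
    dsimp only
    obtain ⟨V₀, hV₀⟩ := hne
    exact le_trans (Set.indicator_nonneg (fun _ _ => ENNReal.toReal_nonneg) x)
      (Finset.le_sup' (fun V => Set.indicator V (fun _ => (μ V).toReal) x) hV₀)
  · intro x
    dsimp only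
    obtain ⟨V, hVs, hVe⟩ := Finset.exists_mem_eq_sup' hne
      (fun V => Set.indicator V (fun _ => (μ V).toReal) x)
    rw [hVe]
    by_cases hx : x ∈ V
    · rw [Set.indicator_of_mem hx]
      exact typ_lower hc hnn μ (hso V hVs).measurableSet fun y hy => hsδ V hVs x hx y hy
    · rw [Set.indicator_of_notMem hx, mul_zero]
      exact typ_nonneg hnn μ x
  · set t := s.filter fun V => μ V ≠ 0 with ht
    have htne : t.Nonempty := by
      obtain ⟨V, hVs, hVbig⟩ := exists_big hne hscov μ
      refine ⟨V, Finset.mem_filter.mpr ⟨hVs, fun h0 => ?_⟩⟩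
      rw [h0] at hVbig
      simp only [ENNReal.toReal_zero] at hVbig
      have : (0:ℝ) < 1 / (s.card : ℝ) := by positivity
      linarith
    refine ⟨(t.image fun V => (μ V).toReal).min' (htne.image _), ?_, ?_⟩
    · obtain ⟨V, hVt, hVe⟩ := Finset.mem_image.mp ((t.image fun V => (μ V).toReal).min'_mem (htne.image _))
      rw [← hVe]
      exact ENNReal.toReal_pos (Finset.mem_filter.mp hVt).2 (measure_ne_top μ V)
    · have hnull : μ (⋃ V ∈ s.filter (fun V => μ V = 0), (V : Set X)) = 0 := by
        refine le_antisymm (le_trans (measure_biUnion_finset_le _ id) (le_of_eq ?_)) zero_le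
        exact Finset.sum_eq_zero fun V hV => (Finset.mem_filter.mp hV).2
      rw [ae_iff]
      refine measure_mono_null (fun x hx => ?_) hnull
      simp only [Set.mem_setOf_eq, not_le] at hx
      have hxcov : x ∈ ⋃ V ∈ s, (V : Set X) := by rw [hscov]; exact Set.mem_univ x
      obtain ⟨V, hVs, hxV⟩ := Set.mem_iUnion₂.mp hxcov
      refine Set.mem_biUnion (Finset.mem_filter.mpr ⟨hVs, ?_⟩) hxV
      by_contra hV0
      have hVt : V ∈ t := Finset.mem_filter.mpr ⟨hVs, hV0⟩
      have h1 : (t.image fun V => (μ V).toReal).min' (htne.image _) ≤ (μ V).toReal :=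
        Finset.min'_le _ _ (Finset.mem_image_of_mem _ hVt)
      have h2 : (μ V).toReal ≤ s.sup' hne fun W => Set.indicator W (fun _ => (μ W).toReal) x := by
        refine le_trans (le_of_eq ?_) (Finset.le_sup' _ hVs)
        rw [Set.indicator_of_mem hxV]
      linarith
  · intro x hgx
    dsimp only at hgx ⊢
    obtain ⟨V, hVs, hVe⟩ := Finset.exists_mem_eq_sup' hne
      (fun V => Set.indicator V (fun _ => (μ V).toReal) x)
    by_cases hx : x ∈ V
    · exact ⟨V, hVs, hx, by rw [hVe, Set.indicator_of_mem hx]⟩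
    · rw [hVe, Set.indicator_of_notMem hx] at hgx
      exact absurd hgx (lt_irrefl 0)


lemma typ_ae_lower (L : X → X → ℝ) (hc : Continuous fun p : X × X => L p.1 p.2)
    (hnn : ∀ x y, 0 ≤ L x y) {δ : ℝ} (hδ : 0 < δ) {s : Finset (Set X)} (hne : s.Nonempty)
    (hso : ∀ V ∈ s, IsOpen V) (hscov : (⋃ V ∈ s, V) = Set.univ)
    (hsδ : ∀ V ∈ s, ∀ x ∈ V, ∀ y ∈ V, δ ≤ L x y)
    (μ : Measure X) [IsProbabilityMeasure μ] :
    ∃ c, 0 < c ∧ ∀ᵐ x ∂μ, c ≤ typ L μ x := by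
  obtain ⟨g, hg0, hgtyp, ⟨c, hcpos, hcae⟩, -⟩ := exists_g L hc hnn hδ hne hso hscov hsδ μ
  exact ⟨δ * c, by positivity, hcae.mono fun x hx =>
    le_trans (mul_le_mul_of_nonneg_left hx hδ.le) (hgtyp x)⟩

lemma log_typ_integral_lower (L : X → X → ℝ) (hc : Continuous fun p : X × X => L p.1 p.2)
    (hnn : ∀ x y, 0 ≤ L x y) {δ : ℝ} (hδ : 0 < δ) {s : Finset (Set X)} (hne : s.Nonempty)
    (hso : ∀ V ∈ s, IsOpen V) (hscov : (⋃ V ∈ s, V) = Set.univ)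
    (hsδ : ∀ V ∈ s, ∀ x ∈ V, ∀ y ∈ V, δ ≤ L x y)
    {M : ℝ} (hM : ∀ x y, L x y ≤ M)
    (μ : Measure X) [IsProbabilityMeasure μ] :
    Real.log δ - s.card ≤ ∫ x, Real.log (typ L μ x) ∂μ := by
  classical
  obtain ⟨g, hg0, hgtyp, ⟨c, hcpos, hcae⟩, hgat⟩ := exists_g L hc hnn hδ hne hso hscov hsδ μ
  obtain ⟨c', hc', hcae'⟩ := typ_ae_lower L hc hnn hδ hne hso hscov hsδ μ
  set m : Set X → ℝ := fun V => (μ V).toReal with hm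
  have hm0 : ∀ V : Set X, 0 ≤ m V := fun V => ENNReal.toReal_nonneg
  have hm1 : ∀ V : Set X, m V ≤ 1 := fun V => by
    simpa using ENNReal.toReal_mono (by simp : (1:ℝ≥0∞) ≠ ⊤) (prob_le_one (μ := μ) (s := V))
  have hterm0 : ∀ V : Set X, 0 ≤ -Real.log (m V) :=
    fun V => neg_nonneg.2 (Real.log_nonpos (hm0 V) (hm1 V))
  set h : X → ℝ := fun x => ∑ V ∈ s, Set.indicator V (fun _ => -Real.log (m V)) x with hh
  have hint_h : Integrable h μ :=
    integrable_finset_sum _ fun V hV => (integrable_const _).indicator (hso V hV).measurableSet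
  have htyp_meas : Measurable (typ L μ) := (typ_cont L hc μ).measurable
  have hint_log : Integrable (fun x => Real.log (typ L μ x)) μ := by
    refine integrable_bdd ((Real.measurable_log.comp htyp_meas).aestronglyMeasurable)
      (C := |Real.log c'| + |Real.log M|) ?_
    filter_upwards [hcae'] with x hx
    exact abs_log_le hc' hx (typ_le_const hc hM μ x)
  have hpt : ∀ᵐ x ∂μ, Real.log δ - h x ≤ Real.log (typ L μ x) := by
    filter_upwards [hcae] with x hx
    have hgpos : 0 < g x := lt_of_lt_of_le hcpos hx
    obtain ⟨V, hVs, hxV, hgV⟩ := hgat x hgpos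
    have h1 : Real.log (δ * g x) ≤ Real.log (typ L μ x) :=
      Real.log_le_log (by positivity) (hgtyp x)
    rw [Real.log_mul (ne_of_gt hδ) (ne_of_gt hgpos)] at h1
    have h2 : -Real.log (g x) ≤ h x := by
      rw [hgV]
      calc -Real.log (m V) = Set.indicator V (fun _ => -Real.log (m V)) x := by
            rw [Set.indicator_of_mem hxV]
        _ ≤ ∑ W ∈ s, Set.indicator W (fun _ => -Real.log (m W)) x :=
            Finset.single_le_sum (f := fun W => Set.indicator W (fun _ => -Real.log (m W)) x)
              (fun W _ => Set.indicator_nonneg (fun _ _ => hterm0 W) x) hVs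
    linarith
  have hmono := integral_mono_ae ((integrable_const (Real.log δ)).sub hint_h) hint_log hpt
  simp only [Pi.sub_apply] at hmono
  rw [integral_sub (integrable_const _) hint_h, integral_const, measureReal_def, measure_univ] at hmono
  simp only [ENNReal.toReal_one, smul_eq_mul, one_mul] at hmono
  have hih : ∫ x, h x ∂μ = ∑ V ∈ s, m V * (-Real.log (m V)) := by
    rw [hh, integral_finset_sum _
      (fun V hV => (integrable_const _).indicator (hso V hV).measurableSet)]
    refine Finset.sum_congr rfl fun V hV => ?_
    rw [integral_indicator_const _ (hso V hV).measurableSet]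
    simp [hm, smul_eq_mul, mul_comm, measureReal_def]
  have hsum : ∑ V ∈ s, m V * (-Real.log (m V)) ≤ (s.card : ℝ) := by
    have hcard := Finset.sum_le_card_nsmul s (fun V => m V * (-Real.log (m V))) 1 ?_
    · simpa using hcard
    · intro V _
      show _ ≤ _
      rcases eq_or_lt_of_le (hm0 V) with h0 | hpos
      · simp [← h0]
      · have hlog := Real.log_le_sub_one_of_pos (inv_pos.mpr hpos)
        rw [Real.log_inv] at hlog
        have hinv : m V * (m V)⁻¹ = 1 := mul_inv_cancel₀ (ne_of_gt hpos)
        nlinarith [mul_le_mul_of_nonneg_left hlog (le_of_lt hpos)]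
  rw [hih] at hmono
  linarith

lemma rpow_typ_integral_upper (L : X → X → ℝ) (hc : Continuous fun p : X × X => L p.1 p.2)
    (hnn : ∀ x y, 0 ≤ L x y) {δ : ℝ} (hδ : 0 < δ) {s : Finset (Set X)} (hne : s.Nonempty)
    (hso : ∀ V ∈ s, IsOpen V) (hscov : (⋃ V ∈ s, V) = Set.univ)
    (hsδ : ∀ V ∈ s, ∀ x ∈ V, ∀ y ∈ V, δ ≤ L x y)
    (μ : Measure X) [IsProbabilityMeasure μ]
    {e : ℝ} (he0 : e ≤ 0) (he1 : -1 ≤ e) :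
    ∫ x, typ L μ x ^ e ∂μ ≤ δ ^ e * s.card := by
  classical
  obtain ⟨g, hg0, hgtyp, ⟨c, hcpos, hcae⟩, hgat⟩ := exists_g L hc hnn hδ hne hso hscov hsδ μ
  set m : Set X → ℝ := fun V => (μ V).toReal with hm
  have hm0 : ∀ V : Set X, 0 ≤ m V := fun V => ENNReal.toReal_nonneg
  have hm1 : ∀ V : Set X, m V ≤ 1 := fun V => by
    simpa using ENNReal.toReal_mono (by simp : (1:ℝ≥0∞) ≠ ⊤) (prob_le_one (μ := μ) (s := V))
  set h : X → ℝ := fun x => ∑ V ∈ s, Set.indicator V (fun _ => (m V) ^ e) x with hh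
  have hint_h : Integrable h μ :=
    integrable_finset_sum _ fun V hV => (integrable_const _).indicator (hso V hV).measurableSet
  have htyp_meas : Measurable (typ L μ) := (typ_cont L hc μ).measurable
  have hint_lhs : Integrable (fun x => typ L μ x ^ e) μ := by
    refine integrable_bdd
      ((measurable_rpow_comp htyp_meas e (typ_nonneg hnn μ)).aestronglyMeasurable)
      (C := (δ * c) ^ e) ?_
    filter_upwards [hcae] with x hx
    rw [abs_of_nonneg (Real.rpow_nonneg (typ_nonneg hnn μ x) e)]
    refine Real.rpow_le_rpow_of_nonpos (by positivity) ?_ he0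
    exact le_trans (mul_le_mul_of_nonneg_left hx hδ.le) (hgtyp x)
  have hpt : ∀ᵐ x ∂μ, typ L μ x ^ e ≤ δ ^ e * h x := by
    filter_upwards [hcae] with x hx
    have hgpos : 0 < g x := lt_of_lt_of_le hcpos hx
    obtain ⟨V, hVs, hxV, hgV⟩ := hgat x hgpos
    have h1 : typ L μ x ^ e ≤ (δ * g x) ^ e :=
      Real.rpow_le_rpow_of_nonpos (by positivity) (hgtyp x) he0
    rw [Real.mul_rpow hδ.le (hg0 x)] at h1
    refine h1.trans (mul_le_mul_of_nonneg_left ?_ (Real.rpow_nonneg hδ.le e))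
    rw [hgV]
    calc (m V) ^ e = Set.indicator V (fun _ => (m V) ^ e) x := by
          rw [Set.indicator_of_mem hxV]
      _ ≤ ∑ W ∈ s, Set.indicator W (fun _ => (m W) ^ e) x :=
          Finset.single_le_sum (f := fun W => Set.indicator W (fun _ => (m W) ^ e) x)
            (fun W _ => Set.indicator_nonneg (fun _ _ => Real.rpow_nonneg (hm0 W) e) x) hVs
  have hmono := integral_mono_ae hint_lhs (hint_h.const_mul (δ ^ e)) hpt
  rw [integral_const_mul] at hmono
  have hih : ∫ x, h x ∂μ = ∑ V ∈ s, (m V) ^ e * m V := by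
    rw [hh, integral_finset_sum _
      (fun V hV => (integrable_const _).indicator (hso V hV).measurableSet)]
    refine Finset.sum_congr rfl fun V hV => ?_
    rw [integral_indicator_const _ (hso V hV).measurableSet]
    simp [hm, smul_eq_mul, mul_comm, measureReal_def]
  have hsum : ∑ V ∈ s, (m V) ^ e * m V ≤ (s.card : ℝ) := by
    have hcard := Finset.sum_le_card_nsmul s (fun V => (m V) ^ e * m V) 1 ?_
    · simpa using hcard
    · intro V _
      show _ ≤ _
      rcases eq_or_lt_of_le (hm0 V) with h0 | hpos
      · simp [← h0]
      · rw [← Real.rpow_add_one (ne_of_gt hpos) e]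
        exact Real.rpow_le_one (hm0 V) (hm1 V) (by linarith)
  rw [hih] at hmono
  refine hmono.trans (mul_le_mul_of_nonneg_left hsum (Real.rpow_nonneg hδ.le e))


lemma finish_sup {α : Type*} [Nonempty α] (f g : α → ℝ) (C : ℝ)
    (h : ∀ a, f a ≤ g a ∧ g a ≤ C) : (⨆ a, f a) ≤ ⨆ a, g a :=
  ciSup_le fun a => le_trans (h a).1
    (le_ciSup (⟨C, by rintro x ⟨a, rfl⟩; exact (h a).2⟩ : BddAbove (Set.range g)) a)

end helpers

/-- if `K ≥ K'` pointwise are symmetric similarity kernels on a nonempty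
compact Hausdorff space `X`, then `Dmax(X,K) ≤ Dmax(X,K')`, where
`Dmax(X,K) = sup_{μ ∈ P(X)} D_q^K(μ)` (independent of `q ∈ [0,∞]`). -/
theorem stmt16 {X : Type*} [TopologicalSpace X] [CompactSpace X] [T2Space X] [Nonempty X]
    [MeasurableSpace X] [BorelSpace X]
    (K K' : X → X → ℝ)
    (hKc : Continuous fun p : X × X => K p.1 p.2)
    (hKnn : ∀ x y, 0 ≤ K x y) (hKd : ∀ x, 0 < K x x)
    (hKs : ∀ x y, K x y = K y x)
    (hKc' : Continuous fun p : X × X => K' p.1 p.2)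
    (hKnn' : ∀ x y, 0 ≤ K' x y) (hKd' : ∀ x, 0 < K' x x)
    (hKs' : ∀ x y, K' x y = K' y x)
    (hle : ∀ x y, K' x y ≤ K x y) :
    ∀ q : EReal, 0 ≤ q →
      (⨆ μ : ProbabilityMeasure X, diversity K (μ : Measure X) q) ≤
        ⨆ μ : ProbabilityMeasure X, diversity K' (μ : Measure X) q := by
  intro q hq
  haveI : Nonempty (ProbabilityMeasure X) :=
    ⟨⟨Measure.dirac (Classical.arbitrary X), inferInstance⟩⟩
  obtain ⟨δ, hδ, s, hne, hso, hscov, hsδ⟩ := exists_cover K' hKc' hKd'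
  obtain ⟨M, hM⟩ : ∃ M, ∀ x y, K x y ≤ M := by
    obtain ⟨M, hM⟩ := isCompact_univ.exists_bound_of_continuousOn hKc.continuousOn
    exact ⟨M, fun x y => le_trans (le_abs_self _)
      (by simpa [Real.norm_eq_abs] using hM (x, y) trivial)⟩
  have hM' : ∀ x y, K' x y ≤ M := fun x y => (hle x y).trans (hM x y)
  have hcard : 0 < (s.card : ℝ) := by exact_mod_cast hne.card_pos
  have hqb : q ≠ ⊥ := by rintro rfl; simp at hq
  rcases eq_or_ne q ⊤ with rfl | hqt
  · refine finish_sup _ _ (δ * (1 / s.card))⁻¹ fun μ => ?_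
    have hmono : ∀ x, typ K' (μ : Measure X) x ≤ typ K (μ : Measure X) x :=
      typ_mono hKc hKc' hle _
    have hub : ∀ x, typ K (μ : Measure X) x ≤ M := typ_le_const hKc hM _
    have hub' : ∀ x, typ K' (μ : Measure X) x ≤ M := typ_le_const hKc' hM' _
    haveI : NeBot (ae (μ : Measure X)) := ae_neBot.mpr (IsProbabilityMeasure.ne_zero _)
    have hbd : IsBoundedUnder (· ≤ ·) (ae (μ : Measure X)) (typ K (μ : Measure X)) :=
      isBoundedUnder_of ⟨M, hub⟩
    have hbd' : IsBoundedUnder (· ≤ ·) (ae (μ : Measure X)) (typ K' (μ : Measure X)) :=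
      isBoundedUnder_of ⟨M, hub'⟩
    have h1 : essSup (typ K' (μ : Measure X)) (μ : Measure X) ≤
        essSup (typ K (μ : Measure X)) (μ : Measure X) := by
      simp only [essSup]
      exact limsup_le_limsup (Eventually.of_forall hmono)
        (isCoboundedUnder_le_of_le _ fun x => typ_nonneg hKnn' _ x) hbd
    obtain ⟨V, hVs, hVbig⟩ := exists_big hne hscov (μ : Measure X)
    have h2 : δ * (1 / s.card) ≤ essSup (typ K' (μ : Measure X)) (μ : Measure X) := by
      have hfreq : ∃ᶠ x in ae (μ : Measure X), δ * (1 / s.card) ≤ typ K' (μ : Measure X) x := by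
        rw [frequently_ae_iff]
        intro h0
        have hsub : V ⊆ {x | δ * (1 / s.card) ≤ typ K' (μ : Measure X) x} := fun x hx => by
          have hl := typ_lower hKc' hKnn' (μ : Measure X) (hso V hVs).measurableSet
            (fun y hy => hsδ V hVs x hx y hy)
          exact le_trans (mul_le_mul_of_nonneg_left hVbig hδ.le) hl
        have hV0 : (μ : Measure X) V = 0 := measure_mono_null hsub h0
        rw [hV0] at hVbig
        simp only [ENNReal.toReal_zero] at hVbig
        have : (0:ℝ) < 1 / s.card := by positivity
        linarith
      simp only [essSup]
      exact le_limsup_of_frequently_le hfreq hbd'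
    have h3 : 0 < essSup (typ K' (μ : Measure X)) (μ : Measure X) :=
      lt_of_lt_of_le (by positivity) h2
    constructor
    · simp only [diversity, if_pos rfl]
      exact inv_anti₀ h3 h1
    · simp only [diversity, if_pos rfl]
      exact inv_anti₀ (by positivity) h2
  · have h1t : (1 : EReal) ≠ ⊤ := by rw [← EReal.coe_one]; exact EReal.coe_ne_top 1
    have h1b : (1 : EReal) ≠ ⊥ := by rw [← EReal.coe_one]; exact EReal.coe_ne_bot 1
    rcases eq_or_ne q 1 with rfl | hq1
    · refine finish_sup _ _ (Real.exp ((s.card : ℝ) - Real.log δ)) fun μ => ?_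
      obtain ⟨c, hcpos, hcae'⟩ := typ_ae_lower K' hKc' hKnn' hδ hne hso hscov hsδ (μ : Measure X)
      have hmono : ∀ x, typ K' (μ : Measure X) x ≤ typ K (μ : Measure X) x :=
        typ_mono hKc hKc' hle _
      have hub : ∀ x, typ K (μ : Measure X) x ≤ M := typ_le_const hKc hM _
      have hub' : ∀ x, typ K' (μ : Measure X) x ≤ M := typ_le_const hKc' hM' _
      have hcaeK : ∀ᵐ x ∂(μ : Measure X), c ≤ typ K (μ : Measure X) x :=
        hcae'.mono fun x hx => hx.trans (hmono x)
      have hint' : Integrable (fun x => Real.log (typ K' (μ : Measure X) x)) (μ : Measure X) := by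
        refine integrable_bdd
          ((Real.measurable_log.comp (typ_cont K' hKc' _).measurable).aestronglyMeasurable)
          (C := |Real.log c| + |Real.log M|) ?_
        filter_upwards [hcae'] with x hx
        exact abs_log_le hcpos hx (hub' x)
      have hint : Integrable (fun x => Real.log (typ K (μ : Measure X) x)) (μ : Measure X) := by
        refine integrable_bdd
          ((Real.measurable_log.comp (typ_cont K hKc _).measurable).aestronglyMeasurable)
          (C := |Real.log c| + |Real.log M|) ?_
        filter_upwards [hcaeK] with x hx
        exact abs_log_le hcpos hx (hub x)
      constructor
      · simp only [diversity, if_neg h1t, if_neg h1b, if_pos rfl]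
        refine Real.exp_le_exp.mpr (neg_le_neg ?_)
        refine integral_mono_ae hint' hint ?_
        filter_upwards [hcae'] with x hx
        exact Real.log_le_log (lt_of_lt_of_le hcpos hx) (hmono x)
      · simp only [diversity, if_neg h1t, if_neg h1b, if_pos rfl]
        refine Real.exp_le_exp.mpr ?_
        have hll := log_typ_integral_lower K' hKc' hKnn' hδ hne hso hscov hsδ hM' (μ : Measure X)
        linarith
    · have hco : ((q.toReal : ℝ) : EReal) = q := EReal.coe_toReal hqt hqb
      have ht0 : 0 ≤ q.toReal := by
        have h0 : ((0:ℝ) : EReal) ≤ ((q.toReal : ℝ) : EReal) := by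
          rw [hco, EReal.coe_zero]; exact hq
        exact_mod_cast h0
      have ht1 : q.toReal ≠ 1 := fun h => hq1 (by rw [← hco, h, EReal.coe_one])
      rcases lt_or_gt_of_ne ht1 with hlt | hgt
      · -- q.toReal < 1
        have he0 : q.toReal - 1 ≤ 0 := by linarith
        have he1 : -1 ≤ q.toReal - 1 := by linarith
        have hp0 : 0 < 1 / (1 - q.toReal) := by
          have : 0 < 1 - q.toReal := by linarith
          positivity
        refine finish_sup _ _ ((δ ^ (q.toReal - 1) * s.card) ^ (1 / (1 - q.toReal)))
          fun μ => ?_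
        obtain ⟨c, hcpos, hcae'⟩ :=
          typ_ae_lower K' hKc' hKnn' hδ hne hso hscov hsδ (μ : Measure X)
        have hmono : ∀ x, typ K' (μ : Measure X) x ≤ typ K (μ : Measure X) x :=
          typ_mono hKc hKc' hle _
        have hcaeK : ∀ᵐ x ∂(μ : Measure X), c ≤ typ K (μ : Measure X) x :=
          hcae'.mono fun x hx => hx.trans (hmono x)
        have hintK' : Integrable (fun x => typ K' (μ : Measure X) x ^ (q.toReal - 1))
            (μ : Measure X) := by
          refine integrable_bdd ((measurable_rpow_comp (typ_cont K' hKc' _).measurable _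
            (typ_nonneg hKnn' _)).aestronglyMeasurable) (C := c ^ (q.toReal - 1)) ?_
          filter_upwards [hcae'] with x hx
          rw [abs_of_nonneg (Real.rpow_nonneg (typ_nonneg hKnn' _ x) _)]
          exact Real.rpow_le_rpow_of_nonpos hcpos hx he0
        have hintK : Integrable (fun x => typ K (μ : Measure X) x ^ (q.toReal - 1))
            (μ : Measure X) := by
          refine integrable_bdd ((measurable_rpow_comp (typ_cont K hKc _).measurable _
            (typ_nonneg hKnn _)).aestronglyMeasurable) (C := c ^ (q.toReal - 1)) ?_
          filter_upwards [hcaeK] with x hx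
          rw [abs_of_nonneg (Real.rpow_nonneg (typ_nonneg hKnn _ x) _)]
          exact Real.rpow_le_rpow_of_nonpos hcpos hx he0
        have hAB : ∫ x, typ K (μ : Measure X) x ^ (q.toReal - 1) ∂(μ : Measure X) ≤
            ∫ x, typ K' (μ : Measure X) x ^ (q.toReal - 1) ∂(μ : Measure X) := by
          refine integral_mono_ae hintK hintK' ?_
          filter_upwards [hcae'] with x hx
          exact Real.rpow_le_rpow_of_nonpos (lt_of_lt_of_le hcpos hx) (hmono x) he0
        constructor
        · simp only [diversity, if_neg hqt, if_neg hqb, if_neg hq1]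
          exact Real.rpow_le_rpow
            (integral_nonneg fun x => Real.rpow_nonneg (typ_nonneg hKnn _ x) _) hAB hp0.le
        · simp only [diversity, if_neg hqt, if_neg hqb, if_neg hq1]
          have hup := rpow_typ_integral_upper K' hKc' hKnn' hδ hne hso hscov hsδ
            (μ : Measure X) he0 he1
          exact Real.rpow_le_rpow
            (integral_nonneg fun x => Real.rpow_nonneg (typ_nonneg hKnn' _ x) _) hup hp0.le
      · -- q.toReal > 1
        have he0 : 0 ≤ q.toReal - 1 := by linarith
        have hp0 : 1 / (1 - q.toReal) ≤ 0 := by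
          have h1 : 1 - q.toReal < 0 := by linarith
          exact le_of_lt (div_neg_of_pos_of_neg one_pos h1)
        refine finish_sup _ _
          (((δ * (1 / s.card)) ^ (q.toReal - 1) * (1 / s.card)) ^ (1 / (1 - q.toReal)))
          fun μ => ?_
        obtain ⟨c, hcpos, hcae'⟩ :=
          typ_ae_lower K' hKc' hKnn' hδ hne hso hscov hsδ (μ : Measure X)
        have hmono : ∀ x, typ K' (μ : Measure X) x ≤ typ K (μ : Measure X) x :=
          typ_mono hKc hKc' hle _
        have hub : ∀ x, typ K (μ : Measure X) x ≤ M := typ_le_const hKc hM _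
        have hub' : ∀ x, typ K' (μ : Measure X) x ≤ M := typ_le_const hKc' hM' _
        have hintK' : Integrable (fun x => typ K' (μ : Measure X) x ^ (q.toReal - 1))
            (μ : Measure X) := by
          refine integrable_bdd ((measurable_rpow_comp (typ_cont K' hKc' _).measurable _
            (typ_nonneg hKnn' _)).aestronglyMeasurable) (C := M ^ (q.toReal - 1)) ?_
          refine Eventually.of_forall fun x => ?_
          rw [abs_of_nonneg (Real.rpow_nonneg (typ_nonneg hKnn' _ x) _)]
          exact Real.rpow_le_rpow (typ_nonneg hKnn' _ x) (hub' x) he0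
        have hintK : Integrable (fun x => typ K (μ : Measure X) x ^ (q.toReal - 1))
            (μ : Measure X) := by
          refine integrable_bdd ((measurable_rpow_comp (typ_cont K hKc _).measurable _
            (typ_nonneg hKnn _)).aestronglyMeasurable) (C := M ^ (q.toReal - 1)) ?_
          refine Eventually.of_forall fun x => ?_
          rw [abs_of_nonneg (Real.rpow_nonneg (typ_nonneg hKnn _ x) _)]
          exact Real.rpow_le_rpow (typ_nonneg hKnn _ x) (hub x) he0
        have hAB : ∫ x, typ K' (μ : Measure X) x ^ (q.toReal - 1) ∂(μ : Measure X) ≤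
            ∫ x, typ K (μ : Measure X) x ^ (q.toReal - 1) ∂(μ : Measure X) :=
          integral_mono hintK' hintK fun x =>
            Real.rpow_le_rpow (typ_nonneg hKnn' _ x) (hmono x) he0
        have hApos : 0 < ∫ x, typ K' (μ : Measure X) x ^ (q.toReal - 1) ∂(μ : Measure X) := by
          have hce : c ^ (q.toReal - 1) ≤
              ∫ x, typ K' (μ : Measure X) x ^ (q.toReal - 1) ∂(μ : Measure X) := by
            have hci : ∫ (_ : X), c ^ (q.toReal - 1) ∂(μ : Measure X) = c ^ (q.toReal - 1) := by
              simp
            rw [← hci]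
            refine integral_mono_ae (integrable_const _) hintK' ?_
            filter_upwards [hcae'] with x hx
            exact Real.rpow_le_rpow hcpos.le hx he0
          exact lt_of_lt_of_le (Real.rpow_pos_of_pos hcpos _) hce
        constructor
        · simp only [diversity, if_neg hqt, if_neg hqb, if_neg hq1]
          exact Real.rpow_le_rpow_of_nonpos hApos hAB hp0
        · simp only [diversity, if_neg hqt, if_neg hqb, if_neg hq1]
          obtain ⟨V, hVs, hVbig⟩ := exists_big hne hscov (μ : Measure X)
          have hlow : ∀ x ∈ V, (δ * ((μ : Measure X) V).toReal) ^ (q.toReal - 1) ≤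
              typ K' (μ : Measure X) x ^ (q.toReal - 1) := fun x hx =>
            Real.rpow_le_rpow (by positivity)
              (typ_lower hKc' hKnn' (μ : Measure X) (hso V hVs).measurableSet
                (fun y hy => hsδ V hVs x hx y hy)) he0
          have hstep2 : (δ * ((μ : Measure X) V).toReal) ^ (q.toReal - 1) *
              ((μ : Measure X) V).toReal ≤
              ∫ x in V, typ K' (μ : Measure X) x ^ (q.toReal - 1) ∂(μ : Measure X) :=
            setIntegral_ge_of_const_le_real (hso V hVs).measurableSet (measure_ne_top _ _)
              hlow hintK'.integrableOn
          have hstep1 : ∫ x in V, typ K' (μ : Measure X) x ^ (q.toReal - 1) ∂(μ : Measure X) ≤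
              ∫ x, typ K' (μ : Measure X) x ^ (q.toReal - 1) ∂(μ : Measure X) :=
            setIntegral_le_integral hintK'
              (Eventually.of_forall fun x => Real.rpow_nonneg (typ_nonneg hKnn' _ x) _)
          have hstep3 : (δ * (1 / s.card)) ^ (q.toReal - 1) * (1 / s.card) ≤
              (δ * ((μ : Measure X) V).toReal) ^ (q.toReal - 1) *
                ((μ : Measure X) V).toReal := by
            refine mul_le_mul (Real.rpow_le_rpow (by positivity)
              (mul_le_mul_of_nonneg_left hVbig hδ.le) he0) hVbig (by positivity)
              (Real.rpow_nonneg (by positivity) _)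
          have hA : (δ * (1 / s.card)) ^ (q.toReal - 1) * (1 / s.card) ≤
              ∫ x, typ K' (μ : Measure X) x ^ (q.toReal - 1) ∂(μ : Measure X) :=
            le_trans (hstep3.trans hstep2) hstep1
          have hapos : 0 < (δ * (1 / s.card)) ^ (q.toReal - 1) * (1 / s.card) := by positivity
          exact Real.rpow_le_rpow_of_nonpos hapos hA hp0
end

section
/- Let (X,K) be a nonempty symmetric space with similarities, μ a maximising probability measure, and x ∈ X. Then (Kμ)(x) ≥ 1/Dmax(X); consequently there exists y ∈ supp μ with K(x,y) ≥ 1/Dmax(X). -/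
open MeasureTheory

open Filter Set Topology

lemma diversity_two_eq_inv_integral_typ {X : Type*} [MeasurableSpace X] (K : X → X → ℝ)
    (ν : Measure X) : diversity K ν ((2 : ℝ) : EReal) = (∫ z, typ K ν z ∂ν)⁻¹ := by
  have h1 : ((2 : ℝ) : EReal) ≠ 1 := by
    rw [← EReal.coe_one]
    exact_mod_cast (by norm_num : (2 : ℝ) ≠ 1)
  simp only [diversity, if_neg (EReal.coe_ne_top 2), if_neg (EReal.coe_ne_bot 2), if_neg h1,
    EReal.toReal_coe]
  norm_num [Real.rpow_neg_one]

lemma msupp_eq_support {X : Type*} [TopologicalSpace X] [MeasurableSpace X] (μ : Measure X) :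
    msupp μ = μ.support := by
  ext x
  simp only [msupp, Measure.support_eq_forall_isOpen, mem_ofPred_eq]
  exact forall_congr' fun U => forall_comm

lemma le_of_forall_le_mix_quadratic {I t k : ℝ}
    (h : ∀ s ∈ Ioc (0 : ℝ) 1, I ≤ (1 - s) ^ 2 * I + 2 * s * (1 - s) * t + s ^ 2 * k) :
    I ≤ t := by
  have hslope : ∀ s ∈ Ioc (0 : ℝ) 1, 0 ≤ 2 * (t - I) + s * (I - 2 * t + k) := by
    intro s hs
    refine nonneg_of_mul_nonneg_right ?_ hs.1
    have := h s hs
    linarith [show s * (2 * (t - I) + s * (I - 2 * t + k)) =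
      (1 - s) ^ 2 * I + 2 * s * (1 - s) * t + s ^ 2 * k - I by ring]
  have hlim : Tendsto (fun s : ℝ => 2 * (t - I) + s * (I - 2 * t + k)) (𝓝[>] 0)
      (𝓝 (2 * (t - I))) := by
    have : Continuous fun s : ℝ => 2 * (t - I) + s * (I - 2 * t + k) := by fun_prop
    simpa using (this.tendsto 0).mono_left nhdsWithin_le_nhds
  have := ge_of_tendsto hlim (mem_of_superset (Ioc_mem_nhdsGT one_pos) hslope)
  linarith

noncomputable def diracMix {X : Type*} [MeasurableSpace X] (μ : Measure X) (x : X) (s : ℝ) :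
    Measure X :=
  ENNReal.ofReal (1 - s) • μ + ENNReal.ofReal s • Measure.dirac x

lemma isProbabilityMeasure_diracMix {X : Type*} [MeasurableSpace X] (μ : Measure X)
    [IsProbabilityMeasure μ] (x : X) {s : ℝ} (hs : s ∈ Icc (0 : ℝ) 1) :
    IsProbabilityMeasure (diracMix μ x s) := by
  constructor
  simp only [diracMix, Measure.add_apply, Measure.smul_apply, smul_eq_mul, measure_univ, mul_one]
  rw [← ENNReal.ofReal_add (sub_nonneg.mpr hs.2) hs.1, sub_add_cancel, ENNReal.ofReal_one]

instance {X : Type*} [MeasurableSpace X] (μ : Measure X) [IsFiniteMeasure μ] (x : X) (s : ℝ) :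
    IsFiniteMeasure (diracMix μ x s) := by
  constructor
  simp [diracMix, ENNReal.mul_lt_top]

section CompactSpace

variable {X : Type*} [TopologicalSpace X] [CompactSpace X] [MeasurableSpace X]
  [OpensMeasurableSpace X]

lemma Continuous.integrable_of_compactSpace {E : Type*} [NormedAddCommGroup E] {f : X → E}
    (hf : Continuous f) (ν : Measure X) [IsFiniteMeasure ν] : Integrable f ν :=
  hf.integrable_of_hasCompactSupport (.of_compactSpace f)

lemma continuous_typ {K : X → X → ℝ} (hK : Continuous (Function.uncurry K)) (ν : Measure X)
    [IsFiniteMeasure ν] : Continuous (typ K ν) := by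
  have hlip : LipschitzWith ⟨ν.real univ, measureReal_nonneg⟩
      (fun f : C(X, ℝ) => ∫ y, f y ∂ν) := by
    refine LipschitzWith.of_dist_le_mul fun f g => ?_
    rw [Real.dist_eq, ← integral_sub (f.continuous.integrable_of_compactSpace ν)
      (g.continuous.integrable_of_compactSpace ν), ← Real.norm_eq_abs]
    calc ‖∫ y, (f - g) y ∂ν‖
        ≤ ν.real univ * ‖BoundedContinuousFunction.mkOfCompact (f - g)‖ :=
          (BoundedContinuousFunction.mkOfCompact (f - g)).norm_integral_le_mul_norm ν
      _ = ν.real univ * dist f g := by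
          rw [BoundedContinuousFunction.norm_mkOfCompact, dist_eq_norm]
  exact hlip.continuous.comp (ContinuousMap.curry ⟨_, hK⟩).continuous

lemma exists_mem_msupp_le_of_le_integral {f : X → ℝ} (hf : Continuous f) (μ : Measure X)
    [IsProbabilityMeasure μ] {c : ℝ} (hc : c ≤ ∫ y, f y ∂μ) : ∃ y ∈ msupp μ, c ≤ f y := by
  by_contra! hlt
  have hsub : {y | ∫ z, f z ∂μ ≤ f y} ⊆ μ.supportᶜ := fun y hy hy' =>
    (hlt y ((msupp_eq_support μ).symm ▸ hy')).not_ge (hc.trans hy)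
  exact (measure_integral_le_pos (hf.integrable_of_compactSpace μ)).ne'
    (Measure.measure_eq_zero_of_isCompact_subset_compl_support
      (isClosed_le continuous_const hf).isCompact hsub)

section DiracMix

variable (μ : Measure X) [IsFiniteMeasure μ] (x : X) {s : ℝ} (hs : s ∈ Icc (0 : ℝ) 1)
include hs

lemma integral_diracMix {g : X → ℝ} (hg : Continuous g) :
    ∫ y, g y ∂(diracMix μ x s) = (1 - s) * ∫ y, g y ∂μ + s * g x := by
  rw [diracMix, integral_add_measure
      ((hg.integrable_of_compactSpace μ).smul_measure ENNReal.ofReal_ne_top)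
      ((hg.integrable_of_compactSpace _).smul_measure ENNReal.ofReal_ne_top),
    integral_smul_measure, integral_smul_measure, integral_dirac' _ _ hg.stronglyMeasurable,
    ENNReal.toReal_ofReal (sub_nonneg.mpr hs.2), ENNReal.toReal_ofReal hs.1, smul_eq_mul,
    smul_eq_mul]

variable {K : X → X → ℝ} (hK : Continuous (Function.uncurry K))
include hK

lemma typ_diracMix (z : X) : typ K (diracMix μ x s) z = (1 - s) * typ K μ z + s * K z x :=
  integral_diracMix μ x hs (hK.comp (Continuous.prodMk_right z))

lemma integral_typ_diracMix (hKs : ∀ a b, K a b = K b a) :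
    ∫ z, typ K (diracMix μ x s) z ∂(diracMix μ x s) =
      (1 - s) ^ 2 * ∫ z, typ K μ z ∂μ + 2 * s * (1 - s) * typ K μ x + s ^ 2 * K x x := by
  have hKx : Continuous fun z => K z x := hK.comp (Continuous.prodMk_left x)
  have hcol : ∫ z, K z x ∂μ = typ K μ x := by simp only [hKs _ x]; rfl
  rw [integral_diracMix μ x hs (continuous_typ hK _)]
  simp only [typ_diracMix μ x hs hK]
  rw [integral_add ((continuous_typ hK μ).integrable_of_compactSpace μ |>.const_mul _)
      (hKx.integrable_of_compactSpace μ |>.const_mul _),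
    integral_const_mul, integral_const_mul, hcol]
  ring

lemma integral_typ_diracMix_pos (hKs : ∀ a b, K a b = K b a) (hKnn : ∀ a b, 0 ≤ K a b)
    (hKd : 0 < K x x) (hs₀ : 0 < s) :
    0 < ∫ z, typ K (diracMix μ x s) z ∂(diracMix μ x s) := by
  have hI : 0 ≤ ∫ z, typ K μ z ∂μ := integral_nonneg fun z => integral_nonneg (hKnn z)
  have ht : 0 ≤ typ K μ x := integral_nonneg (hKnn x)
  rw [integral_typ_diracMix μ x hs hK hKs]
  exact add_pos_of_nonneg_of_pos (add_nonneg (mul_nonneg (sq_nonneg _) hI)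
    (mul_nonneg (mul_nonneg (by positivity) (sub_nonneg.mpr hs.2)) ht))
    (mul_pos (pow_pos hs₀ 2) hKd)

end DiracMix

theorem integral_typ_le_typ_of_forall_le_diracMix {K : X → X → ℝ}
    (hK : Continuous (Function.uncurry K)) (hKs : ∀ a b, K a b = K b a) (μ : Measure X)
    [IsFiniteMeasure μ] (x : X)
    (h : ∀ s ∈ Ioc (0 : ℝ) 1,
      ∫ z, typ K μ z ∂μ ≤ ∫ z, typ K (diracMix μ x s) z ∂(diracMix μ x s)) :
    ∫ z, typ K μ z ∂μ ≤ typ K μ x :=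
  le_of_forall_le_mix_quadratic fun s hs =>
    (h s hs).trans_eq (integral_typ_diracMix μ x (Ioc_subset_Icc_self hs) hK hKs)

end CompactSpace

theorem stmt17_general {X : Type*} [TopologicalSpace X] [CompactSpace X]
    [MeasurableSpace X] [BorelSpace X]
    (K : X → X → ℝ) (hKc : Continuous fun p : X × X => K p.1 p.2)
    (hKnn : ∀ x y, 0 ≤ K x y) (hKd : ∀ x, 0 < K x x)
    (hKs : ∀ x y, K x y = K y x)
    (μ : ProbabilityMeasure X)
    (hmax : ∀ q : EReal, 0 ≤ q → ∀ ν : ProbabilityMeasure X,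
      diversity K (ν : Measure X) q ≤ diversity K (μ : Measure X) q)
    (x : X) :
    1 / diversity K (μ : Measure X) ((2 : ℝ) : EReal) ≤ typ K (μ : Measure X) x ∧
    ∃ y ∈ msupp (μ : Measure X),
      1 / diversity K (μ : Measure X) ((2 : ℝ) : EReal) ≤ K x y := by
  set I := ∫ z, typ K μ z ∂(μ : Measure X)
  have hmix : ∀ s ∈ Ioc (0 : ℝ) 1,
      0 < ∫ z, typ K (diracMix μ x s) z ∂(diracMix μ x s) ∧
      (∫ z, typ K (diracMix μ x s) z ∂(diracMix μ x s))⁻¹ ≤ I⁻¹ := by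
    intro s hs
    have hs' := Ioc_subset_Icc_self hs
    have hmaxs := hmax ((2 : ℝ) : EReal) (EReal.coe_nonneg.mpr zero_le_two)
      ⟨diracMix μ x s, isProbabilityMeasure_diracMix _ x hs'⟩
    rw [diversity_two_eq_inv_integral_typ, diversity_two_eq_inv_integral_typ] at hmaxs
    exact ⟨integral_typ_diracMix_pos _ x hs' hKc hKs hKnn (hKd x) hs.1, hmaxs⟩
  -- at `s = 1` the mixture is `δₓ`, for which `∬ K = K x x > 0`
  have hI : 0 < I := inv_pos.mp <|
    (inv_pos.mpr (hmix 1 ⟨one_pos, le_rfl⟩).1).trans_le (hmix 1 ⟨one_pos, le_rfl⟩).2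
  have htyp : I ≤ typ K μ x := integral_typ_le_typ_of_forall_le_diracMix hKc hKs _ x
    fun s hs => (inv_le_inv₀ (hmix s hs).1 hI).mp (hmix s hs).2
  rw [diversity_two_eq_inv_integral_typ, one_div, inv_inv]
  exact ⟨htyp, exists_mem_msupp_le_of_le_integral (hKc.comp (Continuous.prodMk_right x)) _ htyp⟩

/-- if `μ` is a maximising measure on a nonempty symmetric space with
similarities and `x ∈ X`, then `(Kμ)(x) ≥ 1/Dmax(X)`, and consequently there is
`y ∈ supp μ` with `K(x,y) ≥ 1/Dmax(X)`.  Here `Dmax(X)` is realised as the diversity of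
order `2` of the maximising measure `μ`. -/
theorem stmt17 {X : Type*} [TopologicalSpace X] [CompactSpace X] [T2Space X] [Nonempty X]
    [MeasurableSpace X] [BorelSpace X]
    (K : X → X → ℝ) (hKc : Continuous fun p : X × X => K p.1 p.2)
    (hKnn : ∀ x y, 0 ≤ K x y) (hKd : ∀ x, 0 < K x x)
    (hKs : ∀ x y, K x y = K y x)
    (μ : ProbabilityMeasure X)
    (hmax : ∀ q : EReal, 0 ≤ q → ∀ ν : ProbabilityMeasure X,
      diversity K (ν : Measure X) q ≤ diversity K (μ : Measure X) q)
    (x : X) :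
    1 / diversity K (μ : Measure X) ((2 : ℝ) : EReal) ≤ typ K (μ : Measure X) x ∧
    ∃ y ∈ msupp (μ : Measure X),
      1 / diversity K (μ : Measure X) ((2 : ℝ) : EReal) ≤ K x y :=
  stmt17_general K hKc hKnn hKd hKs μ hmax x
end

section
/- Let X ⊆ ℝⁿ be a compact set of nonzero Lebesgue measure λ(X), let λ̄_X be normalised Lebesgue measure on X, and for t > 0 let K^t(x,y) = e^{−t‖x−y‖}. Then for every q ∈ [0,∞] and every t > 0, the diversity satisfies D_q^{K^t}(λ̄_X) ≥ λ(X) tⁿ / (n! ω_n), where ω_n is the volume of the unit ball in ℝⁿ. -/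
open MeasureTheory

section Aux

variable {n : ℕ}

/-- `x ↦ exp (-t‖x‖)` is integrable on `ℝⁿ`. -/
lemma aux_integrable_exp {t : ℝ} (ht : 0 < t) :
    Integrable (fun x : EuclideanSpace ℝ (Fin n) => Real.exp (-t * ‖x‖)) := by
  set u : ℝ := min t 1 with hu
  have hu0 : 0 < u := lt_min ht one_pos
  have hut : u ≤ t := min_le_left _ _
  set m : ℕ := n + 1 with hm
  have hmain : Integrable (fun x : EuclideanSpace ℝ (Fin n) => (1 + ‖x‖) ^ (-(m : ℝ))) :=
    integrable_one_add_norm (by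
      rw [finrank_euclideanSpace_fin]
      exact_mod_cast Nat.lt_succ_self n)
  refine ((hmain.const_mul (Real.exp u * m.factorial / u ^ m))).mono'
    ((Real.continuous_exp.comp (continuous_const.mul continuous_norm)).aestronglyMeasurable) ?_
  filter_upwards with x
  set r : ℝ := ‖x‖ with hr
  have hr0 : 0 ≤ r := norm_nonneg _
  have key : (u * (1 + r)) ^ m / m.factorial ≤ Real.exp (u * (1 + r)) :=
    Real.pow_div_factorial_le_exp (x := u * (1 + r)) (by positivity) m
  have hpow_pos : (0:ℝ) < (u * (1 + r)) ^ m := by positivity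
  have h1 : Real.exp (-t * r) ≤ Real.exp (-(u * (1 + r))) * Real.exp u := by
    rw [← Real.exp_add]
    apply Real.exp_le_exp.2
    nlinarith
  have h2 : Real.exp (-(u * (1 + r))) ≤ m.factorial / (u * (1 + r)) ^ m := by
    rw [Real.exp_neg]
    rw [inv_le_iff_one_le_mul₀ (Real.exp_pos _), div_mul_eq_mul_div, le_div_iff₀ hpow_pos, one_mul]
    calc (u * (1 + r)) ^ m = ((u * (1 + r)) ^ m / m.factorial) * m.factorial := by
          field_simp
      _ ≤ Real.exp (u * (1 + r)) * m.factorial := by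
          have : (0:ℝ) < m.factorial := by positivity
          nlinarith
      _ = (m.factorial : ℝ) * Real.exp (u * (1 + r)) := by ring
  have hRHS : Real.exp u * (m.factorial : ℝ) / u ^ m * (1 + r) ^ (-(m : ℝ)) =
      m.factorial / (u * (1 + r)) ^ m * Real.exp u := by
    rw [Real.rpow_neg (by positivity), Real.rpow_natCast, mul_pow]
    field_simp
  rw [Real.norm_eq_abs, abs_of_pos (Real.exp_pos _), hRHS]
  calc Real.exp (-t * r) ≤ Real.exp (-(u * (1 + r))) * Real.exp u := h1
    _ ≤ m.factorial / (u * (1 + r)) ^ m * Real.exp u := by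
        have := Real.exp_pos u
        nlinarith

/-- The value of `∫ exp (-t‖x‖)` on `ℝⁿ`. -/
lemma aux_integral_exp {t : ℝ} (ht : 0 < t) :
    ∫ x : EuclideanSpace ℝ (Fin n), Real.exp (-t * ‖x‖) =
      (n.factorial : ℝ) * (volume (Metric.ball (0 : EuclideanSpace ℝ (Fin n)) 1)).toReal
        / t ^ n := by
  have h1 := MeasureTheory.measure_unitBall_eq_integral_div_gamma
    (volume : Measure (EuclideanSpace ℝ (Fin n))) (p := 1) one_pos
  simp only [Real.rpow_one, finrank_euclideanSpace_fin, div_one] at h1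
  have hΓ : Real.Gamma ((n : ℝ) + 1) = n.factorial := Real.Gamma_nat_eq_factorial n
  rw [hΓ] at h1
  have hI1nonneg : 0 ≤ ∫ x : EuclideanSpace ℝ (Fin n), Real.exp (-‖x‖) :=
    integral_nonneg fun x => (Real.exp_pos _).le
  have hfact : (0:ℝ) < n.factorial := by positivity
  have hω : (volume (Metric.ball (0 : EuclideanSpace ℝ (Fin n)) 1)).toReal =
      (∫ x : EuclideanSpace ℝ (Fin n), Real.exp (-‖x‖)) / n.factorial := by
    rw [h1, ENNReal.toReal_ofReal (by positivity)]
  have hI1 : ∫ x : EuclideanSpace ℝ (Fin n), Real.exp (-‖x‖) =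
      (n.factorial : ℝ) * (volume (Metric.ball (0 : EuclideanSpace ℝ (Fin n)) 1)).toReal := by
    rw [hω]; field_simp
  have h2 := MeasureTheory.Measure.integral_comp_smul_of_nonneg
    (volume : Measure (EuclideanSpace ℝ (Fin n)))
    (fun y : EuclideanSpace ℝ (Fin n) => Real.exp (-‖y‖)) t (hR := ht.le)
  simp only [norm_smul, Real.norm_eq_abs, abs_of_pos ht, finrank_euclideanSpace_fin,
    smul_eq_mul] at h2
  have h3 : (fun x : EuclideanSpace ℝ (Fin n) => Real.exp (-(t * ‖x‖))) =
      fun x : EuclideanSpace ℝ (Fin n) => Real.exp (-t * ‖x‖) := by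
    funext x; rw [neg_mul]
  rw [h3] at h2
  rw [h2, hI1]
  have htn : (0:ℝ) < t ^ n := by positivity
  field_simp

end Aux

/-- for a compact set `X ⊆ ℝⁿ` of nonzero volume, the normalised Lebesgue
measure `λ̄_X` on `X` satisfies, for the kernel `K^t(x,y) = e^{−t‖x−y‖}` with `t > 0` and
every order `q ∈ [0,∞]`:
`D_q^{K^t}(λ̄_X) ≥ λ(X) tⁿ / (n! ωₙ)`, where `ωₙ` is the volume of the unit ball. -/
theorem stmt19 (n : ℕ) (X : Set (EuclideanSpace ℝ (Fin n)))
    (hX : IsCompact X) (hvol : volume X ≠ 0) :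
    ∀ q : EReal, 0 ≤ q → ∀ t : ℝ, 0 < t →
      (volume X).toReal * t ^ n /
          ((n.factorial : ℝ) *
            (volume (Metric.ball (0 : EuclideanSpace ℝ (Fin n)) 1)).toReal) ≤
        diversity (fun x y => Real.exp (-t * dist x y))
          ((volume X)⁻¹ • Measure.restrict volume X) q := by
  intro q hq0 t ht
  set μ : Measure (EuclideanSpace ℝ (Fin n)) := (volume X)⁻¹ • Measure.restrict volume X with hμdef
  set K : (EuclideanSpace ℝ (Fin n)) → (EuclideanSpace ℝ (Fin n)) → ℝ := fun x y => Real.exp (-t * dist x y) with hKdef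
  have hXfin : volume X ≠ ⊤ := (show volume X < ⊤ from hX.measure_lt_top).ne
  have hXm : MeasurableSet X := hX.isClosed.measurableSet
  set a : ℝ := (volume X).toReal with hadef
  have ha : 0 < a := ENNReal.toReal_pos hvol hXfin
  set ω : ℝ := (volume (Metric.ball (0 : (EuclideanSpace ℝ (Fin n))) 1)).toReal with hωdef
  have hω : 0 < ω :=
    ENNReal.toReal_pos (Metric.measure_ball_pos volume 0 one_pos).ne' measure_ball_lt_top.ne
  set b : ℝ := (n.factorial : ℝ) * ω with hbdef
  have hb : 0 < b := by positivity
  set M : ℝ := b / (a * t ^ n) with hMdef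
  have hM : 0 < M := by positivity
  have hc : a * t ^ n / b = M⁻¹ := by rw [hMdef, inv_div]
  rw [show (volume X).toReal * t ^ n / ((n.factorial : ℝ) *
      (volume (Metric.ball (0 : (EuclideanSpace ℝ (Fin n))) 1)).toReal) = M⁻¹ from hc]
  -- basic instances
  haveI : IsFiniteMeasure (volume.restrict X) :=
    ⟨by rw [Measure.restrict_apply_univ]; exact hX.measure_lt_top⟩
  haveI : NeZero (volume.restrict X) :=
    ⟨by
      intro h
      apply hvol
      rw [← Measure.restrict_apply_univ, h]; rfl⟩
  haveI hP : IsProbabilityMeasure μ := by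
    have : μ = ((volume.restrict X) Set.univ)⁻¹ • volume.restrict X := by
      rw [Measure.restrict_apply_univ]
    rw [this]; infer_instance
  have hμ0 : μ ≠ 0 := hP.ne_zero
  haveI hneBot : (ae μ).NeBot := ae_neBot.mpr hμ0
  -- typicality function properties
  have hKcont : Continuous fun p : (EuclideanSpace ℝ (Fin n)) × (EuclideanSpace ℝ (Fin n)) => Real.exp (-t * dist p.1 p.2) :=
    Real.continuous_exp.comp (continuous_const.mul continuous_dist)
  have htyp_meas : StronglyMeasurable (typ K μ) :=
    hKcont.stronglyMeasurable.integral_prod_right'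
  have htyp_nonneg : ∀ x, 0 ≤ typ K μ x := fun x =>
    integral_nonneg fun y => (Real.exp_pos _).le
  have hKint : ∀ x, Integrable (fun y => K x y) μ := by
    intro x
    refine (integrable_const (1:ℝ)).mono'
      ((Real.continuous_exp.comp (continuous_const.mul (continuous_const.dist
        continuous_id))).aestronglyMeasurable) ?_
    filter_upwards with y
    rw [Real.norm_eq_abs, abs_of_pos (Real.exp_pos _)]
    exact Real.exp_le_one_iff.2 (by
      have := dist_nonneg (x := x) (y := y)
      nlinarith)
  have htyp_le_one : ∀ x, typ K μ x ≤ 1 := by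
    intro x
    have : typ K μ x ≤ ∫ _, (1:ℝ) ∂μ := by
      refine integral_mono (hKint x) (integrable_const 1) fun y => ?_
      exact Real.exp_le_one_iff.2 (by
        have := dist_nonneg (x := x) (y := y)
        nlinarith)
    simpa using this
  -- the key upper bound typ ≤ M
  have htyp_le : ∀ x, typ K μ x ≤ M := by
    intro x
    have hInt : Integrable (fun y : (EuclideanSpace ℝ (Fin n)) => Real.exp (-t * dist x y)) volume := by
      have h := (aux_integrable_exp (n := n) ht).comp_sub_left x
      simpa [dist_eq_norm] using h
    have h1 : typ K μ x = a⁻¹ * ∫ y in X, Real.exp (-t * dist x y) := by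
      rw [typ, hμdef, integral_smul_measure, ENNReal.toReal_inv, smul_eq_mul]
    have h2 : ∫ y in X, Real.exp (-t * dist x y) ≤ ∫ y : (EuclideanSpace ℝ (Fin n)), Real.exp (-t * dist x y) :=
      setIntegral_le_integral hInt (Filter.Eventually.of_forall fun y => (Real.exp_pos _).le)
    have h3 : ∫ y : (EuclideanSpace ℝ (Fin n)), Real.exp (-t * dist x y) = b / t ^ n := by
      have heq : ∫ y : (EuclideanSpace ℝ (Fin n)), Real.exp (-t * dist x y) =
          ∫ y : (EuclideanSpace ℝ (Fin n)), Real.exp (-t * ‖x - y‖) := by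
        simp only [dist_eq_norm]
      rw [heq, integral_sub_left_eq_self (fun z : (EuclideanSpace ℝ (Fin n)) => Real.exp (-t * ‖z‖)) volume x,
        aux_integral_exp ht]
    rw [h1]
    calc a⁻¹ * ∫ y in X, Real.exp (-t * dist x y)
        ≤ a⁻¹ * (b / t ^ n) := by
          have := h2.trans_eq h3
          have ha' : (0:ℝ) ≤ a⁻¹ := by positivity
          nlinarith [mul_le_mul_of_nonneg_left this ha']
      _ = M := by rw [hMdef]; field_simp
  -- the lower bound typ ≥ ε a.e.
  set D : ℝ := Metric.diam X with hDdef
  set ε : ℝ := Real.exp (-(t * D)) with hεdef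
  have hε : 0 < ε := Real.exp_pos _
  have hXae : ∀ᵐ x ∂μ, x ∈ X := by
    rw [hμdef]
    exact Measure.ae_smul_measure (ae_restrict_mem hXm) _
  have htyp_ge : ∀ x ∈ X, ε ≤ typ K μ x := by
    intro x hx
    have hae : ∀ᵐ y ∂μ, ε ≤ K x y := by
      filter_upwards [hXae] with y hy
      apply Real.exp_le_exp.2
      have hd : dist x y ≤ D := Metric.dist_le_diam_of_mem hX.isBounded hx hy
      nlinarith
    have := integral_mono_ae (integrable_const ε) (hKint x) hae
    simpa [typ] using this
  have htyp_ge_ae : ∀ᵐ x ∂μ, ε ≤ typ K μ x := hXae.mono fun x hx => htyp_ge x hx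
  -- now case split on q
  rcases eq_or_ne q ⊤ with rfl | hqt
  · -- q = ⊤
    rw [diversity, if_pos rfl]
    have hbdd : Filter.IsBoundedUnder (· ≤ ·) (ae μ) (typ K μ) :=
      Filter.isBoundedUnder_of ⟨1, fun x => htyp_le_one x⟩
    have hcob : Filter.IsCoboundedUnder (· ≤ ·) (ae μ) (typ K μ) :=
      Filter.IsBoundedUnder.isCoboundedUnder_le
        (Filter.isBoundedUnder_of ⟨0, fun x => htyp_nonneg x⟩ :
          Filter.IsBoundedUnder (· ≥ ·) (ae μ) (typ K μ))
    have h1 : essSup (typ K μ) μ ≤ M :=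
      Filter.limsup_le_of_le hcob (Filter.Eventually.of_forall htyp_le)
    have h2 : 0 < essSup (typ K μ) μ :=
      lt_of_lt_of_le hε (Filter.le_limsup_of_frequently_le htyp_ge_ae.frequently hbdd)
    exact inv_anti₀ h2 h1
  rcases eq_or_ne q ⊥ with rfl | hqb
  · exact absurd hq0 (by simp)
  rcases eq_or_ne q 1 with rfl | hq1
  · -- q = 1
    rw [diversity, if_neg (by decide), if_neg (by decide), if_pos rfl]
    set C : ℝ := max |Real.log ε| |Real.log M| with hCdef
    have hlog_int : Integrable (fun x => Real.log (typ K μ x)) μ := by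
      refine (integrable_const C).mono'
        ((Real.measurable_log.comp htyp_meas.measurable).aestronglyMeasurable) ?_
      filter_upwards [htyp_ge_ae] with x hx
      have hpos : 0 < typ K μ x := lt_of_lt_of_le hε hx
      have l1 : Real.log ε ≤ Real.log (typ K μ x) := Real.log_le_log hε hx
      have l2 : Real.log (typ K μ x) ≤ Real.log M := Real.log_le_log hpos (htyp_le x)
      rw [Real.norm_eq_abs, abs_le]
      constructor
      · have : -C ≤ -|Real.log ε| := neg_le_neg (le_max_left _ _)
        have h' : -|Real.log ε| ≤ Real.log ε := neg_abs_le _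
        linarith
      · have : Real.log M ≤ |Real.log M| := le_abs_self _
        have h' : |Real.log M| ≤ C := le_max_right _ _
        linarith
    have hint_le : ∫ x, Real.log (typ K μ x) ∂μ ≤ Real.log M := by
      have := integral_mono_ae hlog_int (integrable_const (Real.log M))
        (by
          filter_upwards [htyp_ge_ae] with x hx
          exact Real.log_le_log (lt_of_lt_of_le hε hx) (htyp_le x))
      simpa using this
    calc M⁻¹ = Real.exp (-(Real.log M)) := by
          rw [Real.exp_neg, Real.exp_log hM]
      _ ≤ Real.exp (-∫ x, Real.log (typ K μ x) ∂μ) :=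
          Real.exp_le_exp.2 (neg_le_neg hint_le)
  -- generic case: q = s ∈ [0,∞), s ≠ 1
  rw [diversity, if_neg hqt, if_neg hqb, if_neg hq1]
  set s : ℝ := q.toReal with hsdef
  have hs0 : 0 ≤ s := by
    have := EReal.toReal_le_toReal hq0 (by simp) hqt
    simpa using this
  have hs1 : s ≠ 1 := by
    intro h
    apply hq1
    rw [← EReal.coe_toReal hqt hqb, ← hsdef, h]
    rfl
  set g : (EuclideanSpace ℝ (Fin n)) → ℝ := fun x => typ K μ x ^ (s - 1) with hgdef
  have hg_nonneg : ∀ x, 0 ≤ g x := fun x => Real.rpow_nonneg (htyp_nonneg x) _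
  have hg_meas : AEStronglyMeasurable g μ :=
    (htyp_meas.measurable.pow measurable_const).aestronglyMeasurable
  have hg_int : Integrable g μ := by
    refine (integrable_const (max (ε ^ (s - 1)) (M ^ (s - 1)))).mono' hg_meas ?_
    filter_upwards [htyp_ge_ae] with x hx
    rw [Real.norm_eq_abs, abs_of_nonneg (hg_nonneg x)]
    rcases le_or_gt 1 s with hs | hs
    · exact le_trans (Real.rpow_le_rpow (htyp_nonneg x) (htyp_le x) (by linarith))
        (le_max_right _ _)
    · exact le_trans (Real.rpow_le_rpow_of_nonpos hε hx (by linarith)) (le_max_left _ _)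
  have hexp_eq : (M ^ (s - 1)) ^ (1 / (1 - s)) = M⁻¹ := by
    rw [← Real.rpow_mul hM.le]
    have h1s : (1:ℝ) - s ≠ 0 := sub_ne_zero.2 (Ne.symm hs1)
    have : (s - 1) * (1 / (1 - s)) = -1 := by
      field_simp
      ring
    rw [this, Real.rpow_neg_one]
  rcases lt_or_gt_of_ne hs1 with hs | hs
  · -- s < 1
    have hI : M ^ (s - 1) ≤ ∫ x, g x ∂μ := by
      have := integral_mono_ae (integrable_const (M ^ (s - 1))) hg_int
        (by
          filter_upwards [htyp_ge_ae] with x hx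
          exact Real.rpow_le_rpow_of_nonpos (lt_of_lt_of_le hε hx) (htyp_le x) (by linarith))
      simpa using this
    calc M⁻¹ = (M ^ (s - 1)) ^ (1 / (1 - s)) := hexp_eq.symm
      _ ≤ (∫ x, g x ∂μ) ^ (1 / (1 - s)) :=
          Real.rpow_le_rpow (by positivity) hI (by
            have : (0:ℝ) < 1 - s := by linarith
            positivity)
  · -- s > 1
    have hIle : ∫ x, g x ∂μ ≤ M ^ (s - 1) := by
      have := integral_mono_ae hg_int (integrable_const (M ^ (s - 1)))
        (Filter.Eventually.of_forall fun x =>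
          Real.rpow_le_rpow (htyp_nonneg x) (htyp_le x) (by linarith))
      simpa using this
    have hIpos : 0 < ∫ x, g x ∂μ := by
      have hle : ε ^ (s - 1) ≤ ∫ x, g x ∂μ := by
        have := integral_mono_ae (integrable_const (ε ^ (s - 1))) hg_int
          (by
            filter_upwards [htyp_ge_ae] with x hx
            exact Real.rpow_le_rpow hε.le hx (by linarith))
        simpa using this
      exact lt_of_lt_of_le (Real.rpow_pos_of_pos hε _) hle
    calc M⁻¹ = (M ^ (s - 1)) ^ (1 / (1 - s)) := hexp_eq.symm
      _ ≤ (∫ x, g x ∂μ) ^ (1 / (1 - s)) :=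
          Real.rpow_le_rpow_of_nonpos hIpos hIle
            (by
              apply div_nonpos_of_nonneg_of_nonpos zero_le_one
              linarith)
end
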